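/- arXiv:2211.00547 — 6 statements merged into one kernel-verified Lean document; each statement's English description precedes it below -/
import Mathlib

section
/- Let X be a second-countable, locally compact, Hausdorff topological space. Then the Lebesgue covering dimension of X equals the Lebesgue covering dimension of its Alexandrov one-point compactification X ∪ {∞}. -/
/-- A topological space has covering dimension at most `n` if every open cover
admits an open refinement of order at most `n + 1`. -/
def HasCoveringDimLE (X : Type*) [TopologicalSpace X] (n : ℕ) : Prop :=
  ∀ 𝒰 : Set (Set X), (∀ U ∈ 𝒰, IsOpen U) → ⋃₀ 𝒰 = Set.univ →
    ∃ 𝒱 : Set (Set X), (∀ V ∈ 𝒱, IsOpen V) ∧ ⋃₀ 𝒱 = Set.univ ∧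
      (∀ V ∈ 𝒱, ∃ U ∈ 𝒰, V ⊆ U) ∧
      ∀ x : X, {V | V ∈ 𝒱 ∧ x ∈ V}.Finite ∧ {V | V ∈ 𝒱 ∧ x ∈ V}.ncard ≤ n + 1

/-- The Lebesgue covering dimension of a topological space, as an extended natural
number (`⊤` if no finite bound exists). -/
noncomputable def coveringDim (X : Type*) [TopologicalSpace X] : ℕ∞ :=
  sInf {m : ℕ∞ | ∃ n : ℕ, m = n ∧ HasCoveringDimLE X n}

section Aux

open Set Topology

theorem hasCoveringDimLE_of_embedding {A Y : Type*} [TopologicalSpace A] [TopologicalSpace Y]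
    {f : A → Y} (hf : Topology.IsEmbedding f) (hrange : IsClosed (Set.range f)) {n : ℕ}
    (h : HasCoveringDimLE Y n) : HasCoveringDimLE A n := by
  classical
  intro 𝒰 hop hcov
  rcases eq_empty_or_nonempty 𝒰 with rfl | ⟨U₀, hU₀⟩
  · have hA : (univ : Set A) = ∅ := by simpa using hcov.symm
    refine ⟨∅, by simp, by simp [hA], by simp, fun x => ?_⟩
    exact absurd (mem_univ x) (by simp [hA])
  · have hext : ∀ U : ↥𝒰, ∃ O : Set Y, IsOpen O ∧ f ⁻¹' O = (U : Set A) :=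
      fun U => hf.toIsInducing.isOpen_iff.mp (hop U U.2)
    choose O hOopen hOpre using hext
    have hCopen : ∀ W ∈ Set.range O ∪ {(Set.range f)ᶜ}, IsOpen W := by
      rintro W (⟨U, rfl⟩ | rfl)
      · exact hOopen U
      · exact hrange.isOpen_compl
    have hCcov : ⋃₀ (Set.range O ∪ {(Set.range f)ᶜ}) = univ := by
      apply eq_univ_of_forall
      intro y
      by_cases hy : y ∈ Set.range f
      · obtain ⟨a, rfl⟩ := hy
        have : a ∈ ⋃₀ 𝒰 := by rw [hcov]; trivial
        obtain ⟨U, hU, haU⟩ := this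
        refine ⟨O ⟨U, hU⟩, Or.inl ⟨⟨U, hU⟩, rfl⟩, ?_⟩
        have := hOpre ⟨U, hU⟩
        show f a ∈ O ⟨U, hU⟩
        rw [← Set.mem_preimage, this]
        exact haU
      · exact ⟨(Set.range f)ᶜ, Or.inr rfl, hy⟩
    obtain ⟨𝒱, hVop, hVcov, hVref, hVord⟩ := h _ hCopen hCcov
    refine ⟨(fun V => f ⁻¹' V) '' 𝒱, ?_, ?_, ?_, ?_⟩
    · rintro W ⟨V, hV, rfl⟩
      exact (hVop V hV).preimage hf.continuous
    · apply eq_univ_of_forall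
      intro a
      have : f a ∈ ⋃₀ 𝒱 := by rw [hVcov]; trivial
      obtain ⟨V, hV, haV⟩ := this
      exact ⟨f ⁻¹' V, ⟨V, hV, rfl⟩, haV⟩
    · rintro W ⟨V, hV, rfl⟩
      obtain ⟨C, hC, hsub⟩ := hVref V hV
      rcases hC with ⟨U, rfl⟩ | rfl
      · exact ⟨U, U.2, by rw [← hOpre U]; exact preimage_mono hsub⟩
      · refine ⟨U₀, hU₀, ?_⟩
        intro a ha
        exact absurd (hsub ha) (by simp)
    · intro a
      have hkey : {W | W ∈ (fun V => f ⁻¹' V) '' 𝒱 ∧ a ∈ W}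
          = (fun V => f ⁻¹' V) '' {V | V ∈ 𝒱 ∧ f a ∈ V} := by
        ext W
        constructor
        · rintro ⟨⟨V, hV, rfl⟩, haW⟩
          exact ⟨V, ⟨hV, haW⟩, rfl⟩
        · rintro ⟨V, ⟨hV, haV⟩, rfl⟩
          exact ⟨⟨V, hV, rfl⟩, haV⟩
      rw [hkey]
      obtain ⟨hfin, hcard⟩ := hVord (f a)
      exact ⟨hfin.image _, le_trans (Set.ncard_image_le hfin) hcard⟩

theorem hasCoveringDimLE_subtype {X : Type*} [TopologicalSpace X] {F : Set X}
    (hFc : IsCompact F) (hFcl : IsClosed F) {n : ℕ}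
    (h : HasCoveringDimLE (OnePoint X) n) : HasCoveringDimLE F n := by
  have hemb : Topology.IsEmbedding (fun x : F => ((x : X) : OnePoint X)) :=
    OnePoint.isOpenEmbedding_coe.toIsEmbedding.comp Topology.IsEmbedding.subtypeVal
  have hr : Set.range (fun x : F => ((x : X) : OnePoint X)) = (↑) '' F := by
    rw [show (fun x : F => ((x : X) : OnePoint X)) = ((↑) : X → OnePoint X) ∘ Subtype.val
      from rfl, Set.range_comp, Subtype.range_coe]
  exact hasCoveringDimLE_of_embedding hemb
    (hr ▸ OnePoint.isClosed_image_coe.mpr ⟨hFcl, hFc⟩) h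

theorem step_lemma {X : Type*} [TopologicalSpace X] {S : Type*} {n : ℕ}
    {F D : Set X} (hFD : F ⊆ D) (hDo : IsOpen D) (hFcl : IsClosed F)
    (hdimF : HasCoveringDimLE F n)
    (g : S → Set X) (hgo : ∀ s, IsOpen (g s)) (hgc : ∀ x, ∃ s, x ∈ g s) :
    ∃ g' : S → Set X, (∀ s, IsOpen (g' s)) ∧ (∀ s, g' s ⊆ g s) ∧ (∀ x, ∃ s, x ∈ g' s) ∧
      (∀ s, ∀ x ∉ D, (x ∈ g' s ↔ x ∈ g s)) ∧
      (∀ x ∈ F, {s | x ∈ g' s}.Finite ∧ {s | x ∈ g' s}.ncard ≤ n + 1) := by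
  classical
  have hCopen : ∀ W ∈ Set.range (fun s : S => (Subtype.val : F → X) ⁻¹' g s), IsOpen W := by
    rintro W ⟨s, rfl⟩; exact (hgo s).preimage continuous_subtype_val
  have hCcov : ⋃₀ Set.range (fun s : S => (Subtype.val : F → X) ⁻¹' g s) = univ :=
    eq_univ_of_forall fun x => by
      obtain ⟨s, hs⟩ := hgc x.1; exact ⟨_, ⟨s, rfl⟩, hs⟩
  obtain ⟨𝒱, hVop, hVcov, hVref, hVord⟩ := hdimF _ hCopen hCcov
  have hwit : ∀ V : ↥𝒱, ∃ s : S, (V : Set F) ⊆ (Subtype.val : F → X) ⁻¹' g s := by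
    intro V
    obtain ⟨C', hC', hsub⟩ := hVref V V.2
    obtain ⟨s, rfl⟩ := hC'
    exact ⟨s, hsub⟩
  choose σ hσ using hwit
  have hextV : ∀ V : ↥𝒱, ∃ O : Set X, IsOpen O ∧ (Subtype.val : F → X) ⁻¹' O = (V : Set F) :=
    fun V => (Topology.IsInducing.subtypeVal.isOpen_iff).mp (hVop V V.2)
  choose O hOo hOpre using hextV
  set E : ↥𝒱 → Set X := fun V => O V ∩ g (σ V) ∩ D with hE
  have hEopen : ∀ V, IsOpen (E V) := fun V => ((hOo V).inter (hgo _)).inter hDo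
  have hEsub : ∀ V, E V ⊆ g (σ V) := fun V x hx => hx.1.2
  have hEmem : ∀ (V : ↥𝒱) (x : X) (hx : x ∈ F), (x ∈ E V ↔ (⟨x, hx⟩ : F) ∈ (V : Set F)) := by
    intro V x hx
    constructor
    · intro h'
      rw [← hOpre V]
      exact h'.1.1
    · intro h'
      refine ⟨⟨?_, hσ V h'⟩, hFD hx⟩
      rw [← hOpre V] at h'
      exact h'
  refine ⟨fun s => (⋃ V : ↥𝒱, ⋃ _ : σ V = s, E V) ∪ (g s \ F), ?_, ?_, ?_, ?_, ?_⟩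
  · intro s
    exact (isOpen_iUnion fun V => isOpen_iUnion fun _ => hEopen V).union ((hgo s).sdiff hFcl)
  · rintro s x (hx | hx)
    · simp only [mem_iUnion] at hx
      obtain ⟨V, rfl, hxE⟩ := hx
      exact hEsub V hxE
    · exact hx.1
  · intro x
    by_cases hx : x ∈ F
    · have : (⟨x, hx⟩ : F) ∈ ⋃₀ 𝒱 := by rw [hVcov]; trivial
      obtain ⟨V, hV, hxV⟩ := this
      refine ⟨σ ⟨V, hV⟩, Or.inl ?_⟩
      simp only [mem_iUnion]
      exact ⟨⟨V, hV⟩, rfl, (hEmem ⟨V, hV⟩ x hx).mpr hxV⟩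
    · obtain ⟨s, hs⟩ := hgc x
      exact ⟨s, Or.inr ⟨hs, hx⟩⟩
  · intro s x hxD
    constructor
    · rintro (hx | hx)
      · simp only [mem_iUnion] at hx
        obtain ⟨V, rfl, hxE⟩ := hx
        exact absurd hxE.2 hxD
      · exact hx.1
    · intro hx
      exact Or.inr ⟨hx, fun hxF => hxD (hFD hxF)⟩
  · intro x hx
    obtain ⟨hTfin, hTcard⟩ := hVord ⟨x, hx⟩
    have hchar : ∀ s, x ∈ (⋃ V : ↥𝒱, ⋃ _ : σ V = s, E V) ∪ (g s \ F) ↔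
        ∃ V : ↥𝒱, σ V = s ∧ x ∈ E V := by
      intro s
      constructor
      · rintro (h' | h')
        · simp only [mem_iUnion] at h'
          obtain ⟨V, h1, h2⟩ := h'
          exact ⟨V, h1, h2⟩
        · exact absurd hx h'.2
      · rintro ⟨V, h1, h2⟩
        refine Or.inl ?_
        simp only [mem_iUnion]
        exact ⟨V, h1, h2⟩
    set A := {s | x ∈ (⋃ V : ↥𝒱, ⋃ _ : σ V = s, E V) ∪ (g s \ F)} with hA
    have hAc : ∀ s ∈ A, ∃ V : ↥𝒱, σ V = s ∧ x ∈ E V := fun s hs => (hchar s).mp hs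
    set φ : S → Set F := fun s =>
      if h : ∃ V : ↥𝒱, σ V = s ∧ x ∈ E V then (h.choose : Set F) else ∅ with hφ
    have hmaps : ∀ s ∈ A, φ s ∈ {V | V ∈ 𝒱 ∧ (⟨x, hx⟩ : F) ∈ V} := by
      intro s hs
      have h := hAc s hs
      simp only [hφ, dif_pos h]
      exact ⟨h.choose.2, (hEmem h.choose x hx).mp h.choose_spec.2⟩
    have hinj : Set.InjOn φ A := by
      intro s₁ h₁ s₂ h₂ heq
      have g₁ := hAc s₁ h₁
      have g₂ := hAc s₂ h₂
      simp only [hφ, dif_pos g₁, dif_pos g₂] at heq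
      have : g₁.choose = g₂.choose := Subtype.ext heq
      rw [← g₁.choose_spec.1, ← g₂.choose_spec.1, this]
    constructor
    · exact Set.Finite.of_finite_image (hTfin.subset (by
        rintro _ ⟨s, hs, rfl⟩; exact hmaps s hs)) hinj
    · exact le_trans (Set.ncard_le_ncard_of_injOn φ hmaps hinj hTfin) hTcard

theorem hasCoveringDimLE_of_onePoint {X : Type*} [TopologicalSpace X] [T2Space X]
    [LocallyCompactSpace X] [SecondCountableTopology X] {n : ℕ}
    (h : HasCoveringDimLE (OnePoint X) n) : HasCoveringDimLE X n := by
  classical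
  intro 𝒰 hop hcov
  have hu_cov : ∀ x : X, ∃ s : ↥𝒰, x ∈ (s : Set X) := fun x => by
    have : x ∈ ⋃₀ 𝒰 := by rw [hcov]; trivial
    obtain ⟨U, hU, hx⟩ := this
    exact ⟨⟨U, hU⟩, hx⟩
  set K : CompactExhaustion X := (CompactExhaustion.choice X).shiftr with hKdef
  have hK0 : K 0 = ∅ := rfl
  set F : ℕ → Set X := fun i => K (i+1) \ interior (K i) with hFdef
  set D : ℕ → Set X := fun i => interior (K (i+2)) \ K (i-1) with hDdef
  have hKint : ∀ i : ℕ, K (i-1) ⊆ interior (K i) := by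
    intro i
    cases i with
    | zero => rw [hK0]; exact empty_subset _
    | succ i => exact K.subset_interior (Nat.lt_succ_self i)
  have hFD : ∀ i, F i ⊆ D i := by
    intro i x hx
    exact ⟨K.subset_interior_succ (i+1) hx.1, fun hxK => hx.2 (hKint i hxK)⟩
  have hDo : ∀ i, IsOpen (D i) := fun i => isOpen_interior.sdiff (K.isCompact _).isClosed
  have hFcl : ∀ i, IsClosed (F i) := fun i => (K.isCompact _).isClosed.sdiff isOpen_interior
  have hFcp : ∀ i, IsCompact (F i) := fun i => (K.isCompact _).diff isOpen_interior
  have hdimF : ∀ i, HasCoveringDimLE (F i) n := fun i =>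
    hasCoveringDimLE_subtype (hFcp i) (hFcl i) h
  -- the recursion
  set P : (↥𝒰 → Set X) → Prop := fun g => (∀ s, IsOpen (g s)) ∧ (∀ x, ∃ s, x ∈ g s) with hP
  have hstep : ∀ (i : ℕ) (g : ↥𝒰 → Set X), P g → ∃ g' : ↥𝒰 → Set X, P g' ∧
      ((∀ s, g' s ⊆ g s) ∧ (∀ s, ∀ x ∉ D i, (x ∈ g' s ↔ x ∈ g s)) ∧
       (∀ x ∈ F i, {s | x ∈ g' s}.Finite ∧ {s | x ∈ g' s}.ncard ≤ n + 1)) := by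
    intro i g hg
    obtain ⟨g', h1, h2, h3, h4, h5⟩ :=
      step_lemma (hFD i) (hDo i) (hFcl i) (hdimF i) g hg.1 hg.2
    exact ⟨g', ⟨h1, h3⟩, h2, h4, h5⟩
  have hPu : P (fun s : ↥𝒰 => (s : Set X)) := ⟨fun s => hop s.1 s.2, hu_cov⟩
  set GG : ℕ → {g : ↥𝒰 → Set X // P g} := fun i => Nat.rec ⟨_, hPu⟩
    (fun i gp => ⟨(hstep i gp.1 gp.2).choose, (hstep i gp.1 gp.2).choose_spec.1⟩) i with hGG
  set G : ℕ → ↥𝒰 → Set X := fun i => (GG i).1 with hGdef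
  have hG0 : G 0 = fun s : ↥𝒰 => (s : Set X) := rfl
  have hGopen : ∀ i s, IsOpen (G i s) := fun i s => (GG i).2.1 s
  have hGcov : ∀ i x, ∃ s, x ∈ G i s := fun i => (GG i).2.2
  have hQ : ∀ i, (∀ s, G (i+1) s ⊆ G i s) ∧ (∀ s, ∀ x ∉ D i, (x ∈ G (i+1) s ↔ x ∈ G i s)) ∧
      (∀ x ∈ F i, {s | x ∈ G (i+1) s}.Finite ∧ {s | x ∈ G (i+1) s}.ncard ≤ n + 1) :=
    fun i => (hstep i (GG i).1 (GG i).2).choose_spec.2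
  have hmono : ∀ i j, i ≤ j → ∀ s, G j s ⊆ G i s := by
    intro i j hij
    induction j, hij using Nat.le_induction with
    | base => exact fun s => subset_rfl
    | succ j hij ih => exact fun s => subset_trans ((hQ j).1 s) (ih s)
  have hstab : ∀ m (x : X), x ∈ K m → ∀ s (i : ℕ), m + 1 ≤ i → (x ∈ G i s ↔ x ∈ G (m+1) s) := by
    intro m x hxm s i hi
    induction i, hi using Nat.le_induction with
    | base => rfl
    | succ i hi ih =>
      rw [← ih]
      refine (hQ i).2.1 s x ?_
      intro hxD
      exact hxD.2 (K.subset (by omega : m ≤ i - 1) hxm)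
  set H : ↥𝒰 → Set X := fun s => ⋃ m, (interior (K m) ∩ G (m+1) s) with hH
  have hshell : ∀ x : X, ∃ j, x ∈ F j := by
    intro x
    have hex : ∃ i, x ∈ K i := K.exists_mem x
    set j := Nat.find hex with hj
    have hj1 : 1 ≤ j := by
      rcases Nat.eq_zero_or_pos j with h0 | h1
      · exfalso
        have := Nat.find_spec hex
        rw [← hj, h0, hK0] at this
        exact this
      · exact h1
    refine ⟨j - 1, ?_, fun hint => ?_⟩
    · have : j - 1 + 1 = j := by omega
      rw [this]
      exact Nat.find_spec hex
    · exact Nat.find_min hex (by omega : j - 1 < j) (interior_subset hint)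
  refine ⟨Set.range H, ?_, ?_, ?_, ?_⟩
  · rintro V ⟨s, rfl⟩
    exact isOpen_iUnion fun m => isOpen_interior.inter (hGopen (m+1) s)
  · apply eq_univ_of_forall
    intro x
    obtain ⟨m, hm⟩ := K.exists_mem x
    obtain ⟨s, hs⟩ := hGcov (m+2) x
    refine ⟨H s, ⟨s, rfl⟩, ?_⟩
    exact mem_iUnion.mpr ⟨m+1, K.subset_interior_succ m hm, hs⟩
  · rintro V ⟨s, rfl⟩
    refine ⟨(s : Set X), s.2, ?_⟩
    intro x hx
    obtain ⟨m, hm1, hm2⟩ := mem_iUnion.mp hx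
    have := hmono 0 (m+1) (Nat.zero_le _) s hm2
    rwa [hG0] at this
  · intro x
    obtain ⟨j, hxj⟩ := hshell x
    have hxK : x ∈ K (j+1) := hxj.1
    have hAeq : {s : ↥𝒰 | x ∈ H s} = {s : ↥𝒰 | x ∈ G (j+2) s} := by
      ext s
      simp only [mem_setOf_eq]
      constructor
      · intro hs
        obtain ⟨m', hm'1, hm'2⟩ := mem_iUnion.mp hs
        have hxKm' : x ∈ K m' := interior_subset hm'1
        have h1 := (hstab m' x hxKm' s (max (m'+1) (j+2)) (le_max_left _ _)).mpr hm'2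
        exact (hstab (j+1) x hxK s (max (m'+1) (j+2)) (le_max_right _ _)).mp h1
      · intro hs
        refine mem_iUnion.mpr ⟨j+2, K.subset_interior_succ (j+1) hxK, ?_⟩
        exact (hstab (j+1) x hxK s (j+3) (by omega)).mpr hs
    have hsub2 : {s : ↥𝒰 | x ∈ G (j+2) s} ⊆ {s : ↥𝒰 | x ∈ G (j+1) s} :=
      fun s hs => (hQ (j+1)).1 s hs
    obtain ⟨hfin1, hcard1⟩ := (hQ j).2.2 x hxj
    have hAfin : {s : ↥𝒰 | x ∈ H s}.Finite := by
      rw [hAeq]; exact hfin1.subset hsub2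
    have hAcard : {s : ↥𝒰 | x ∈ H s}.ncard ≤ n + 1 := by
      rw [hAeq]
      exact le_trans (Set.ncard_le_ncard hsub2 hfin1) hcard1
    set φ : Set X → ↥𝒰 := fun V =>
      if hV : ∃ s, H s = V then hV.choose else (hu_cov x).choose with hφ
    have hφH : ∀ V ∈ {V | V ∈ Set.range H ∧ x ∈ V}, H (φ V) = V := by
      rintro V ⟨⟨s, rfl⟩, hxV⟩
      have hV : ∃ s', H s' = H s := ⟨s, rfl⟩
      simp only [hφ, dif_pos hV]
      exact hV.choose_spec
    have hmaps : ∀ V ∈ {V | V ∈ Set.range H ∧ x ∈ V}, φ V ∈ {s : ↥𝒰 | x ∈ H s} := by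
      intro V hV
      have := hφH V hV
      simp only [mem_setOf_eq, this]
      exact hV.2
    have hinj : Set.InjOn φ {V | V ∈ Set.range H ∧ x ∈ V} := by
      intro V₁ h₁ V₂ h₂ heq
      rw [← hφH V₁ h₁, ← hφH V₂ h₂, heq]
    constructor
    · exact Set.Finite.of_finite_image
        (hAfin.subset (by rintro _ ⟨V, hV, rfl⟩; exact hmaps V hV)) hinj
    · exact le_trans (Set.ncard_le_ncard_of_injOn φ hmaps hinj hAfin) hAcard

open OnePoint in
theorem hasCoveringDimLE_onePoint {X : Type*} [TopologicalSpace X] [T2Space X]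
    [LocallyCompactSpace X] {n : ℕ}
    (h : HasCoveringDimLE X n) : HasCoveringDimLE (OnePoint X) n := by
  classical
  intro 𝒰 hop hcov
  have hinf : (∞ : OnePoint X) ∈ ⋃₀ 𝒰 := by rw [hcov]; trivial
  obtain ⟨U₀, hU₀, hinfU0⟩ := hinf
  set K : Set X := (((↑) : X → OnePoint X) ⁻¹' U₀)ᶜ with hK
  have hKcp : IsCompact K := ((OnePoint.isOpen_iff_of_mem' hinfU0).mp (hop U₀ hU₀)).1
  obtain ⟨L, hLcp, hKL⟩ := exists_compact_superset hKcp
  -- a cover of X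
  set C : Set (Set X) :=
    (fun U => (((↑) : X → OnePoint X) ⁻¹' U) ∩ interior L) '' 𝒰 ∪ {Kᶜ} with hC
  have hCopen : ∀ W ∈ C, IsOpen W := by
    rintro W (⟨U, hU, rfl⟩ | rfl)
    · exact ((hop U hU).preimage OnePoint.continuous_coe).inter isOpen_interior
    · rw [hK, compl_compl]
      exact (hop U₀ hU₀).preimage OnePoint.continuous_coe
  have hCcov : ⋃₀ C = univ := by
    apply eq_univ_of_forall
    intro x
    by_cases hx : x ∈ interior L
    · have : ((x : OnePoint X)) ∈ ⋃₀ 𝒰 := by rw [hcov]; trivial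
      obtain ⟨U, hU, hxU⟩ := this
      exact ⟨_, Or.inl ⟨U, hU, rfl⟩, hxU, hx⟩
    · exact ⟨Kᶜ, Or.inr rfl, fun hxK => hx (hKL hxK)⟩
  obtain ⟨𝒱, hVop, hVcov, hVref, hVord⟩ := h C hCopen hCcov
  set 𝒜 : Set (Set X) :=
    {V | V ∈ 𝒱 ∧ ∃ U ∈ 𝒰, V ⊆ (((↑) : X → OnePoint X) ⁻¹' U) ∩ interior L} with h𝒜
  set ℬ : Set (Set X) := 𝒱 \ 𝒜 with hℬ
  have hBsub : ∀ V ∈ ℬ, V ⊆ Kᶜ := by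
    rintro V ⟨hV, hVA⟩
    obtain ⟨W, hW, hsub⟩ := hVref V hV
    rcases hW with ⟨U, hU, rfl⟩ | rfl
    · exact absurd ⟨hV, U, hU, hsub⟩ hVA
    · exact hsub
  set S : Set X := ⋃₀ ℬ with hS
  have hSopen : IsOpen S := isOpen_sUnion fun V hV => hVop V hV.1
  set Wbig : Set (OnePoint X) := {∞} ∪ ((↑) : X → OnePoint X) '' S with hW
  have hpre : ((↑) : X → OnePoint X) ⁻¹' Wbig = S := by
    ext x
    simp [hW, OnePoint.coe_eq_coe, (OnePoint.coe_ne_infty x)]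
  have hScomp : IsCompact Sᶜ := by
    refine hLcp.of_isClosed_subset (hSopen.isClosed_compl) ?_
    intro x hx
    have hx𝒱 : x ∈ ⋃₀ 𝒱 := by rw [hVcov]; trivial
    obtain ⟨V, hV, hxV⟩ := hx𝒱
    by_cases hVA : V ∈ 𝒜
    · obtain ⟨_, U, hU, hsub⟩ := hVA
      exact interior_subset (hsub hxV).2
    · exact absurd ⟨V, ⟨hV, hVA⟩, hxV⟩ hx
  have hWbigOpen : IsOpen Wbig := by
    rw [OnePoint.isOpen_iff_of_mem' (Or.inl rfl), hpre]
    exact ⟨hScomp, hSopen⟩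
  have hWbigU₀ : Wbig ⊆ U₀ := by
    rintro z (rfl | ⟨x, hxS, rfl⟩)
    · exact hinfU0
    · obtain ⟨V, hV, hxV⟩ := hxS
      have : x ∈ Kᶜ := hBsub V hV hxV
      simpa [hK] using this
  refine ⟨(fun V => ((↑) : X → OnePoint X) '' V) '' 𝒜 ∪ {Wbig}, ?_, ?_, ?_, ?_⟩
  · rintro W (⟨V, hV, rfl⟩ | rfl)
    · obtain ⟨hV1, -⟩ := hV
      exact OnePoint.isOpen_image_coe.mpr (hVop V hV1)
    · exact hWbigOpen
  · apply eq_univ_of_forall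
    intro z
    induction z using OnePoint.rec with
    | infty => exact ⟨Wbig, Or.inr rfl, Or.inl rfl⟩
    | coe x =>
      have : x ∈ ⋃₀ 𝒱 := by rw [hVcov]; trivial
      obtain ⟨V, hV, hxV⟩ := this
      by_cases hVA : V ∈ 𝒜
      · exact ⟨_, Or.inl ⟨V, hVA, rfl⟩, ⟨x, hxV, rfl⟩⟩
      · exact ⟨Wbig, Or.inr rfl, Or.inr ⟨x, ⟨V, ⟨hV, hVA⟩, hxV⟩, rfl⟩⟩
  · rintro W (⟨V, hV, rfl⟩ | rfl)
    · obtain ⟨_, U, hU, hsub⟩ := hV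
      refine ⟨U, hU, ?_⟩
      rintro _ ⟨x, hxV, rfl⟩
      exact (hsub hxV).1
    · exact ⟨U₀, hU₀, hWbigU₀⟩
  · intro z
    induction z using OnePoint.rec with
    | infty =>
      have : {W | W ∈ (fun V => ((↑) : X → OnePoint X) '' V) '' 𝒜 ∪ {Wbig} ∧ ∞ ∈ W}
          = {Wbig} := by
        ext W
        constructor
        · rintro ⟨⟨V, hV, rfl⟩ | rfl, hinfW⟩
          · exact absurd hinfW (OnePoint.infty_notMem_image_coe)
          · rfl
        · rintro rfl
          exact ⟨Or.inr rfl, Or.inl rfl⟩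
      rw [this]
      simp
    | coe x =>
      obtain ⟨hfinx, hcardx⟩ := hVord x
      have hsubT : {W | W ∈ (fun V => ((↑) : X → OnePoint X) '' V) '' 𝒜 ∪ {Wbig} ∧ (x : OnePoint X) ∈ W}
          ⊆ (fun V => ((↑) : X → OnePoint X) '' V) '' {V | V ∈ 𝒜 ∧ x ∈ V} ∪ {Wbig} := by
        rintro W ⟨⟨V, hV, rfl⟩ | rfl, hxW⟩
        · obtain ⟨y, hyV, hyx⟩ := hxW
          rw [OnePoint.coe_eq_coe] at hyx
          exact Or.inl ⟨V, ⟨hV, hyx ▸ hyV⟩, rfl⟩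
        · exact Or.inr rfl
      have hA1 : {V | V ∈ 𝒜 ∧ x ∈ V} ⊆ {V | V ∈ 𝒱 ∧ x ∈ V} := by
        rintro V ⟨⟨hV1, -⟩, hxV⟩
        exact ⟨hV1, hxV⟩
      have hfinA : {V | V ∈ 𝒜 ∧ x ∈ V}.Finite := hfinx.subset hA1
      have hfinImg : ((fun V => ((↑) : X → OnePoint X) '' V) '' {V | V ∈ 𝒜 ∧ x ∈ V}).Finite :=
        hfinA.image _
      constructor
      · exact (hfinImg.union (finite_singleton _)).subset hsubT
      · by_cases hxS : x ∈ S
        · -- x is in some set of ℬ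
          obtain ⟨V₀, hV₀, hxV₀⟩ := hxS
          have hsplit : {V | V ∈ 𝒱 ∧ x ∈ V}
              = {V | V ∈ 𝒜 ∧ x ∈ V} ∪ {V | V ∈ ℬ ∧ x ∈ V} := by
            ext V
            constructor
            · rintro ⟨hV, hxV⟩
              by_cases hVA : V ∈ 𝒜
              · exact Or.inl ⟨hVA, hxV⟩
              · exact Or.inr ⟨⟨hV, hVA⟩, hxV⟩
            · rintro (⟨⟨hV1, -⟩, hxV⟩ | ⟨⟨hV1, -⟩, hxV⟩)
              · exact ⟨hV1, hxV⟩
              · exact ⟨hV1, hxV⟩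
          have hdisj : Disjoint {V | V ∈ 𝒜 ∧ x ∈ V} {V | V ∈ ℬ ∧ x ∈ V} := by
            rw [Set.disjoint_left]
            rintro V ⟨hVA, _⟩ ⟨hVB, _⟩
            exact hVB.2 hVA
          have hfinB : {V | V ∈ ℬ ∧ x ∈ V}.Finite :=
            hfinx.subset fun V hV => ⟨hV.1.1, hV.2⟩
          have hBpos : 1 ≤ {V | V ∈ ℬ ∧ x ∈ V}.ncard :=
            (Set.ncard_pos hfinB).mpr ⟨V₀, hV₀, hxV₀⟩
          have hcards : {V | V ∈ 𝒜 ∧ x ∈ V}.ncard + {V | V ∈ ℬ ∧ x ∈ V}.ncard ≤ n + 1 := by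
            rw [← Set.ncard_union_eq hdisj hfinA hfinB, ← hsplit]
            exact hcardx
          calc {W | W ∈ (fun V => ((↑) : X → OnePoint X) '' V) '' 𝒜 ∪ {Wbig} ∧ (x : OnePoint X) ∈ W}.ncard
              ≤ ((fun V => ((↑) : X → OnePoint X) '' V) '' {V | V ∈ 𝒜 ∧ x ∈ V} ∪ {Wbig}).ncard :=
                Set.ncard_le_ncard hsubT (hfinImg.union (finite_singleton _))
            _ ≤ ((fun V => ((↑) : X → OnePoint X) '' V) '' {V | V ∈ 𝒜 ∧ x ∈ V}).ncard + ({Wbig} : Set (Set (OnePoint X))).ncard :=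
                Set.ncard_union_le _ _
            _ ≤ {V | V ∈ 𝒜 ∧ x ∈ V}.ncard + 1 := by
                rw [Set.ncard_singleton]
                exact Nat.add_le_add_right (Set.ncard_image_le hfinA) 1
            _ ≤ {V | V ∈ 𝒜 ∧ x ∈ V}.ncard + {V | V ∈ ℬ ∧ x ∈ V}.ncard :=
                Nat.add_le_add_left hBpos _
            _ ≤ n + 1 := hcards
        · -- x not in S, so ↑x ∉ Wbig
          have hxW : (x : OnePoint X) ∉ Wbig := by
            intro hxW
            have : x ∈ ((↑) : X → OnePoint X) ⁻¹' Wbig := hxW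
            rw [hpre] at this
            exact hxS this
          have hsubT' : {W | W ∈ (fun V => ((↑) : X → OnePoint X) '' V) '' 𝒜 ∪ {Wbig} ∧ (x : OnePoint X) ∈ W}
              ⊆ (fun V => ((↑) : X → OnePoint X) '' V) '' {V | V ∈ 𝒜 ∧ x ∈ V} := by
            intro W hWmem
            rcases hsubT hWmem with hW | rfl
            · exact hW
            · exact absurd hWmem.2 hxW
          calc {W | W ∈ (fun V => ((↑) : X → OnePoint X) '' V) '' 𝒜 ∪ {Wbig} ∧ (x : OnePoint X) ∈ W}.ncard
              ≤ ((fun V => ((↑) : X → OnePoint X) '' V) '' {V | V ∈ 𝒜 ∧ x ∈ V}).ncard :=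
                Set.ncard_le_ncard hsubT' hfinImg
            _ ≤ {V | V ∈ 𝒜 ∧ x ∈ V}.ncard := Set.ncard_image_le hfinA
            _ ≤ {V | V ∈ 𝒱 ∧ x ∈ V}.ncard := Set.ncard_le_ncard hA1 hfinx
            _ ≤ n + 1 := hcardx

end Aux

/-- For a second-countable, locally compact, Hausdorff space `X`,
the covering dimension of `X` equals that of its one-point compactification. -/
theorem stmt_3 {X : Type*} [TopologicalSpace X] [SecondCountableTopology X]
    [LocallyCompactSpace X] [T2Space X] :
    coveringDim X = coveringDim (OnePoint X) := by
  have key : ∀ n : ℕ, HasCoveringDimLE X n ↔ HasCoveringDimLE (OnePoint X) n :=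
    fun n => ⟨hasCoveringDimLE_onePoint, hasCoveringDimLE_of_onePoint⟩
  unfold coveringDim
  congr 1
  ext m
  simp only [Set.mem_setOf_eq]
  constructor
  · rintro ⟨n, rfl, h⟩
    exact ⟨n, rfl, (key n).mp h⟩
  · rintro ⟨n, rfl, h⟩
    exact ⟨n, rfl, (key n).mpr h⟩
end

section
/- Let π : E → B be a continuous open surjection between topological spaces, with E locally compact Hausdorff, such that the fibers of π are exactly the orbits of a continuous action of the circle group 𝕋 on E. Then for every compact set K ⊆ B, the set π⁻¹(K) is compact. -/
/-!
Since `π` is open and `E` is locally compact, a compact `K ⊆ B` lies in `π '' L` for some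
compact `L ⊆ E`. As fibres are orbits, `π⁻¹ K ⊆ 𝕋 • L`, which is compact because `𝕋` is, and
`π⁻¹ K` is closed in it.
-/

open Set
open scoped Pointwise

theorem IsOpenMap.exists_isCompact_image_superset {X Y : Type*} [TopologicalSpace X]
    [WeaklyLocallyCompactSpace X] [TopologicalSpace Y] {f : X → Y} (hf : IsOpenMap f)
    {K : Set Y} (hK : IsCompact K) (hKf : K ⊆ range f) :
    ∃ L : Set X, IsCompact L ∧ K ⊆ f '' L := by
  choose N hN_compact hN_nhds using fun x : X => exists_compact_mem_nhds x
  have hcover : K ⊆ ⋃ x, f '' interior (N x) := by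
    intro y hy
    obtain ⟨x, rfl⟩ := hKf hy
    exact mem_iUnion.mpr ⟨x, mem_image_of_mem f (mem_interior_iff_mem_nhds.mpr (hN_nhds x))⟩
  obtain ⟨t, ht⟩ := hK.elim_finite_subcover _ (fun x => hf _ isOpen_interior) hcover
  refine ⟨⋃ x ∈ t, N x, t.isCompact_biUnion fun x _ => hN_compact x, ht.trans ?_⟩
  simp only [image_iUnion₂]
  exact iUnion₂_mono fun x _ => image_mono interior_subset

theorem preimage_image_subset_univ_smul {G X Y : Type*} [SMul G X] {f : X → Y}
    (hfib : ∀ x x' : X, f x = f x' → ∃ g : G, x' = g • x) (L : Set X) :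
    f ⁻¹' (f '' L) ⊆ (univ : Set G) • L := by
  rintro x' ⟨x, hx, hxx'⟩
  obtain ⟨g, rfl⟩ := hfib x x' hxx'
  exact smul_mem_smul (mem_univ g) hx

theorem IsCompact.preimage_of_isOpenMap_of_fibers_subset_orbits {G X Y : Type*}
    [TopologicalSpace G] [CompactSpace G] [TopologicalSpace X] [WeaklyLocallyCompactSpace X]
    [SMul G X] [ContinuousSMul G X] [TopologicalSpace Y] [T2Space Y] {f : X → Y}
    (hcont : Continuous f) (hopen : IsOpenMap f) (hsurj : Function.Surjective f)
    (hfib : ∀ x x' : X, f x = f x' → ∃ g : G, x' = g • x) {K : Set Y} (hK : IsCompact K) :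
    IsCompact (f ⁻¹' K) := by
  obtain ⟨L, hL, hKL⟩ := hopen.exists_isCompact_image_superset hK fun y _ => hsurj y
  refine ((isCompact_univ (X := G)).smul_set hL).of_isClosed_subset
    (hK.isClosed.preimage hcont) ?_
  exact (preimage_mono hKL).trans (preimage_image_subset_univ_smul hfib L)

theorem stmt_6_general {E B : Type*} [TopologicalSpace E] [LocallyCompactSpace E]
    [TopologicalSpace B] [T2Space B]
    [MulAction Circle E] [ContinuousSMul Circle E]
    (π : E → B) (hcont : Continuous π) (hopen : IsOpenMap π)
    (hsurj : Function.Surjective π)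
    (hfib : ∀ e e' : E, π e = π e' ↔ ∃ z : Circle, e' = z • e)
    (K : Set B) (hK : IsCompact K) :
    IsCompact (π ⁻¹' K) :=
  hK.preimage_of_isOpenMap_of_fibers_subset_orbits hcont hopen hsurj fun e e' => (hfib e e').mp

/-- Let `π : E → B` be a continuous open surjection, `E` locally compact
Hausdorff, whose fibers are exactly the orbits of a continuous action of the circle
group `𝕋` on `E`.  Then the preimage of every compact subset of `B` is compact. -/
theorem stmt_6 {E B : Type*} [TopologicalSpace E] [LocallyCompactSpace E] [T2Space E]
    [TopologicalSpace B] [T2Space B]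
    [MulAction Circle E] [ContinuousSMul Circle E]
    (π : E → B) (hcont : Continuous π) (hopen : IsOpenMap π)
    (hsurj : Function.Surjective π)
    (hfib : ∀ e e' : E, π e = π e' ↔ ∃ z : Circle, e' = z • e)
    (K : Set B) (hK : IsCompact K) :
    IsCompact (π ⁻¹' K) :=
  stmt_6_general π hcont hopen hsurj hfib K hK
end

section
/- Let G be a locally compact Hausdorff r-discrete topological groupoid with non-compact unit space G⁰. Define the Alexandrov groupoid G̃ = G ∪ {∞} with unit space G⁰ ∪ {∞}, composable pairs G⁽²⁾ ∪ {(∞,∞)}, ∞·∞ = ∞, r(∞) = s(∞) = ∞, and topology generated by G̃, the open sets of the one-point compactification G⁰₊, and the open sets of G. Then G̃ is a locally compact Hausdorff r-discrete topological groupoid with compact unit space containing G as an open subgroupoid. -/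
/-- A topological groupoid structure on a topological space `G`.  The range and source
maps land in the set of units (idempotents of `src`), composition `mul g h` is defined
when `src g = rng h`, and all structure maps are continuous. -/
structure TopGroupoid (G : Type*) [TopologicalSpace G] where
  src : G → G
  rng : G → G
  mul : (g h : G) → src g = rng h → G
  inv : G → G
  src_src : ∀ g, src (src g) = src g
  rng_src : ∀ g, rng (src g) = src g
  src_rng : ∀ g, src (rng g) = rng g
  rng_rng : ∀ g, rng (rng g) = rng g
  src_mul : ∀ g h hgh, src (mul g h hgh) = src h
  rng_mul : ∀ g h hgh, rng (mul g h hgh) = rng g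
  mul_assoc : ∀ g h k (hgh : src g = rng h) (hhk : src h = rng k)
      (h₁ : src (mul g h hgh) = rng k) (h₂ : src g = rng (mul h k hhk)),
      mul (mul g h hgh) k h₁ = mul g (mul h k hhk) h₂
  rng_mul_cancel : ∀ g (h : src (rng g) = rng g), mul (rng g) g h = g
  mul_src_cancel : ∀ g (h : src g = rng (src g)), mul g (src g) h = g
  src_inv : ∀ g, src (inv g) = rng g
  rng_inv : ∀ g, rng (inv g) = src g
  inv_inv : ∀ g, inv (inv g) = g
  inv_mul_cancel : ∀ g (h : src (inv g) = rng g), mul (inv g) g h = src g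
  mul_inv_cancel : ∀ g (h : src g = rng (inv g)), mul g (inv g) h = rng g
  continuous_src : Continuous src
  continuous_rng : Continuous rng
  continuous_inv : Continuous inv
  continuous_mul : Continuous fun p : {p : G × G // src p.1 = rng p.2} =>
    mul p.1.1 p.1.2 p.2

namespace TopGroupoid

variable {G : Type*} [TopologicalSpace G] (𝒢 : TopGroupoid G)

/-- The unit space `G⁰` of the groupoid. -/
def units : Set G := {x | 𝒢.src x = x}

/-- A groupoid is principal if `g ↦ (r g, s g)` is injective. -/
def Principal : Prop := Function.Injective fun g => (𝒢.rng g, 𝒢.src g)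

/-- A subset of `G` closed under inversion and composition. -/
def IsSubgroupoid (S : Set G) : Prop :=
  (∀ g ∈ S, 𝒢.inv g ∈ S) ∧
    ∀ g ∈ S, ∀ h ∈ S, ∀ hgh : 𝒢.src g = 𝒢.rng h, 𝒢.mul g h hgh ∈ S

/-- The subgroupoid generated by a subset. -/
def gen (X : Set G) : Set G := ⋂₀ {S | X ⊆ S ∧ 𝒢.IsSubgroupoid S}

/-- A groupoid is étale if its range map is a local homeomorphism. -/
def Etale : Prop :=
  ∀ g : G, ∃ U : Set G, IsOpen U ∧ g ∈ U ∧ Set.InjOn 𝒢.rng U ∧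
    ∀ V ⊆ U, IsOpen V → IsOpen (𝒢.rng '' V)

/-- Dynamic asymptotic dimension at most `d` (Guentner–Willett–Yu): for every open
precompact `V ⊆ G` there are open sets `U₀, …, U_d` in the unit space covering
`s(V) ∪ r(V)` such that each `⟨{g ∈ V : s g, r g ∈ U i}⟩` is precompact. -/
def DadLE (d : ℕ) : Prop :=
  ∀ V : Set G, IsOpen V → IsCompact (closure V) →
    ∃ U : Fin (d + 1) → Set G,
      (∀ i, IsOpen (U i) ∧ U i ⊆ 𝒢.units) ∧
      (𝒢.src '' V ∪ 𝒢.rng '' V ⊆ ⋃ i, U i) ∧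
      ∀ i, IsCompact (closure (𝒢.gen {g ∈ V | 𝒢.src g ∈ U i ∧ 𝒢.rng g ∈ U i}))

/-- Dynamic asymptotic dimension as an extended natural number. -/
noncomputable def dad : ℕ∞ :=
  sInf {m : ℕ∞ | ∃ d : ℕ, m = d ∧ 𝒢.DadLE d}

end TopGroupoid

variable {G : Type*} [TopologicalSpace G]

/-- The basis for the topology of the Alexandrov groupoid `G̃ = G ∪ {∞}`: the whole
space, the open sets of `G`, and the open sets of the one-point compactification of
the unit space. -/
def alexBasis (𝒢 : TopGroupoid G) : Set (Set (Option G)) :=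
  {Set.univ} ∪ {S | ∃ U : Set G, IsOpen U ∧ S = some '' U} ∪
    {S | ∃ K : Set G, K ⊆ 𝒢.units ∧ IsCompact K ∧
      S = insert none (some '' (𝒢.units \ K))}

/-- The topology of the Alexandrov groupoid. -/
def alexTop (𝒢 : TopGroupoid G) : TopologicalSpace (Option G) :=
  TopologicalSpace.generateFrom (alexBasis 𝒢)

/-! The sets open in `G̃` are exactly those `s` with `some ⁻¹' s` open in `G` and, if `∞ ∈ s`,
with `G⁰ \ some ⁻¹' s` compact: the topology of `G` glued along the open set `G⁰` to the
one-point compactification of `G⁰`. From this description `G` is an open subspace of `G̃`, and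
`G⁰ ∪ {∞}` is compact because `∞` is the limit of `G⁰` at infinity. The structure maps are
continuous at `∞` because `r`, `s` and the inverse fix units, and because near `(∞, ∞)` every
composable pair is a pair of equal units, whose product is again that unit. -/

namespace TopGroupoid

open Set Filter Topology

variable {G : Type*} [TopologicalSpace G] (𝒢 : TopGroupoid G)

theorem rng_of_mem_units {x : G} (hx : x ∈ 𝒢.units) : 𝒢.rng x = x := by
  rw [← hx, 𝒢.rng_src]

theorem mul_of_mem_units {x g : G} (hx : x ∈ 𝒢.units) (h : 𝒢.src x = 𝒢.rng g) :
    𝒢.mul x g h = g := by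
  obtain rfl : x = 𝒢.rng g := hx.symm.trans h
  exact 𝒢.rng_mul_cancel g h

theorem inv_of_mem_units {x : G} (hx : x ∈ 𝒢.units) : 𝒢.inv x = x := by
  have h : 𝒢.src x = 𝒢.rng (𝒢.inv x) := by rw [𝒢.rng_inv]
  rw [← 𝒢.mul_of_mem_units hx h, 𝒢.mul_inv_cancel, 𝒢.rng_of_mem_units hx]

theorem isClosed_units [T2Space G] : IsClosed 𝒢.units :=
  isClosed_eq 𝒢.continuous_src continuous_id

def optionMul : (g h : Option G) → Option.map 𝒢.src g = Option.map 𝒢.rng h → Option G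
  | some g, some h, hgh => some (𝒢.mul g h (Option.some.inj hgh))
  | none, none, _ => none
  | some _, none, hgh => nomatch hgh
  | none, some _, hgh => nomatch hgh

theorem exists_mem_alexBasis_subset {s : Set (Option G)} (hW : IsOpen (some ⁻¹' s))
    (hK : none ∈ s → IsCompact (𝒢.units \ some ⁻¹' s)) {x : Option G} (hx : x ∈ s) :
    ∃ v ∈ alexBasis 𝒢, x ∈ v ∧ v ⊆ s := by
  cases x with
  | some g => exact ⟨some '' (some ⁻¹' s), .inl (.inr ⟨_, hW, rfl⟩), ⟨g, hx, rfl⟩,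
      image_preimage_subset _ _⟩
  | none =>
    refine ⟨insert none (some '' (𝒢.units \ (𝒢.units \ some ⁻¹' s))),
      .inr ⟨_, sdiff_subset, hK hx, rfl⟩, mem_insert _ _, ?_⟩
    rintro _ (rfl | ⟨g, hg, rfl⟩)
    · exact hx
    · exact not_not.mp fun h => hg.2 ⟨hg.1, h⟩

section AlexandrovTopology

variable [T2Space G] [τ : TopologicalSpace (Option G)]

theorem isOpen_iff_of_eq_alexTop (hrd : IsOpen 𝒢.units) (hτ : τ = alexTop 𝒢)
    {s : Set (Option G)} :
    IsOpen s ↔ IsOpen (some ⁻¹' s) ∧ (none ∈ s → IsCompact (𝒢.units \ some ⁻¹' s)) := by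
  subst hτ
  constructor
  · intro hs
    induction hs with
    | basic s hs =>
      rcases hs with (rfl | ⟨U, hU, rfl⟩) | ⟨K, hKu, hK, rfl⟩
      · simp
      · simpa [preimage_image_eq _ (Option.some_injective G)] using hU
      · have hpre : some ⁻¹' insert none (some '' (𝒢.units \ K)) = 𝒢.units \ K := by
          ext; simp
        rw [hpre, sdiff_sdiff_cancel_left hKu]
        exact ⟨hrd.sdiff hK.isClosed, fun _ => hK⟩
    | univ => simp
    | inter s t _ _ hs ht =>
      refine ⟨hs.1.inter ht.1, fun h => ?_⟩
      rw [preimage_inter, sdiff_inter]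
      exact (hs.2 h.1).union (ht.2 h.2)
    | sUnion S _ hS =>
      have hW : IsOpen (some ⁻¹' ⋃₀ S) := by
        rw [preimage_sUnion]; exact isOpen_biUnion fun t ht => (hS t ht).1
      refine ⟨hW, fun ⟨t, ht, hnt⟩ => ((hS t ht).2 hnt).of_isClosed_subset
        (𝒢.isClosed_units.sdiff hW) ?_⟩
      exact sdiff_subset_sdiff_right (preimage_mono (subset_sUnion_of_mem ht))
  · rintro ⟨hW, hK⟩
    refine @isOpen_iff_forall_mem_open _ (alexTop 𝒢) _ |>.mpr fun x hx => ?_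
    obtain ⟨v, hv, hxv, hvs⟩ := 𝒢.exists_mem_alexBasis_subset hW hK hx
    exact ⟨v, hvs, TopologicalSpace.isOpen_generateFrom_of_mem hv, hxv⟩

theorem isOpen_image_some (hrd : IsOpen 𝒢.units) (hτ : τ = alexTop 𝒢) {U : Set G}
    (hU : IsOpen U) : IsOpen (some '' U) := by
  simpa [𝒢.isOpen_iff_of_eq_alexTop hrd hτ, preimage_image_eq _ (Option.some_injective G)]

theorem isOpen_insert_none_image_some (hrd : IsOpen 𝒢.units) (hτ : τ = alexTop 𝒢)
    {U : Set G} (hU : IsOpen U) (hK : IsCompact (𝒢.units \ U)) :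
    IsOpen (insert none (some '' U)) := by
  have hpre : some ⁻¹' insert none (some '' U) = U := by ext; simp
  simpa [𝒢.isOpen_iff_of_eq_alexTop hrd hτ, hpre] using ⟨hU, hK⟩

theorem isOpenEmbedding_some (hrd : IsOpen 𝒢.units) (hτ : τ = alexTop 𝒢) :
    IsOpenEmbedding (some : G → Option G) :=
  .of_continuous_injective_isOpenMap
    (continuous_def.mpr fun _ hs => ((𝒢.isOpen_iff_of_eq_alexTop hrd hτ).mp hs).1)
    (Option.some_injective G) fun _ => 𝒢.isOpen_image_some hrd hτ

theorem continuous_optionMap (hrd : IsOpen 𝒢.units) (hτ : τ = alexTop 𝒢) {f : G → G}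
    (hf : Continuous f) (hfix : ∀ x ∈ 𝒢.units, f x = x) : Continuous (Option.map f) := by
  refine continuous_def.mpr fun s hs => ?_
  rw [𝒢.isOpen_iff_of_eq_alexTop hrd hτ] at hs ⊢
  have hunits : 𝒢.units \ f ⁻¹' (some ⁻¹' s) = 𝒢.units \ some ⁻¹' s := by
    ext x
    simp +contextual [hfix x]
  exact ⟨hs.1.preimage hf, fun hn => hunits ▸ hs.2 hn⟩

theorem isOpen_insert_none_image_units (hrd : IsOpen 𝒢.units) (hτ : τ = alexTop 𝒢) :
    IsOpen (insert none (some '' 𝒢.units)) :=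
  𝒢.isOpen_insert_none_image_some hrd hτ hrd (by simp)

def someComposable (q : {q : G × G // 𝒢.src q.1 = 𝒢.rng q.2}) :
    {p : Option G × Option G // Option.map 𝒢.src p.1 = Option.map 𝒢.rng p.2} :=
  ⟨(some q.1.1, some q.1.2), congrArg some q.2⟩

theorem isOpenEmbedding_someComposable (hrd : IsOpen 𝒢.units) (hτ : τ = alexTop 𝒢) :
    IsOpenEmbedding 𝒢.someComposable := by
  have hsome := 𝒢.isOpenEmbedding_some hrd hτ
  refine ⟨.of_comp (by unfold someComposable; fun_prop) continuous_subtype_val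
    ((hsome.prodMap hsome).isEmbedding.comp .subtypeVal), ?_⟩
  have hrange : range 𝒢.someComposable = Subtype.val ⁻¹' (range some ×ˢ range some) := by
    ext ⟨⟨_ | a, _ | b⟩, hab⟩ <;> simp [someComposable]
    exact Option.some.inj hab
  rw [hrange]
  exact (hsome.isOpen_range.prod hsome.isOpen_range).preimage continuous_subtype_val

theorem continuous_optionMul (hrd : IsOpen 𝒢.units) (hτ : τ = alexTop 𝒢) :
    Continuous fun p : {p : Option G × Option G // Option.map 𝒢.src p.1 = Option.map 𝒢.rng p.2} =>
      𝒢.optionMul p.1.1 p.1.2 p.2 := by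
  refine continuous_iff_continuousAt.mpr ?_
  rintro ⟨⟨_ | a, _ | b⟩, hab⟩
  · have hT := 𝒢.isOpen_insert_none_image_units hrd hτ
    refine (continuous_snd.comp continuous_subtype_val).continuousAt.congr ?_
    filter_upwards [((hT.prod hT).preimage continuous_subtype_val).mem_nhds
      ⟨mem_insert _ _, mem_insert _ _⟩]
    rintro ⟨⟨_ | x, _ | y⟩, hxy⟩ ⟨hx, -⟩
    · rfl
    · nomatch hxy
    · nomatch hxy
    · exact congrArg some (𝒢.mul_of_mem_units (by simpa using hx) _).symm
  · nomatch hab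
  · nomatch hab
  · exact ((𝒢.isOpenEmbedding_someComposable hrd hτ).continuousAt_iff
      (x := ⟨(a, b), Option.some.inj hab⟩)).mp
      ((𝒢.isOpenEmbedding_some hrd hτ).continuous.comp 𝒢.continuous_mul).continuousAt

theorem isCompact_insert_none_image_units (hrd : IsOpen 𝒢.units) (hτ : τ = alexTop 𝒢) :
    IsCompact (insert none (some '' 𝒢.units)) := by
  have hlim :
      Tendsto (some ∘ Subtype.val : 𝒢.units → Option G) (cocompact 𝒢.units) (𝓝 none) := by
    refine (nhds_basis_opens none).tendsto_right_iff.mpr fun s ⟨hns, hs⟩ => ?_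
    rw [𝒢.isOpen_iff_of_eq_alexTop hrd hτ] at hs
    refine mem_cocompact.mpr ⟨Subtype.val ⁻¹' (𝒢.units \ some ⁻¹' s),
      𝒢.isClosed_units.isClosedEmbedding_subtypeVal.isCompact_preimage (hs.2 hns), ?_⟩
    intro x hx
    simpa using hx
  have hK := hlim.isCompact_insert_range_of_cocompact
    ((𝒢.isOpenEmbedding_some hrd hτ).continuous.comp continuous_subtype_val)
  rwa [range_comp, Subtype.range_coe] at hK

theorem t2Space [LocallyCompactSpace G] (hrd : IsOpen 𝒢.units) (hτ : τ = alexTop 𝒢) :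
    T2Space (Option G) := by
  have hsome := 𝒢.isOpenEmbedding_some hrd hτ
  have hsep (g : G) : Disjoint (𝓝 (none : Option G)) (𝓝 (some g)) := by
    obtain ⟨K, hK, hKg⟩ := exists_compact_mem_nhds g
    have hKc : IsCompact (𝒢.units \ Kᶜ) := by
      rw [sdiff_compl]; exact hK.inter_left 𝒢.isClosed_units
    refine disjoint_of_disjoint_of_mem ?_
      ((𝒢.isOpen_insert_none_image_some hrd hτ hK.isClosed.isOpen_compl hKc).mem_nhds
        (mem_insert _ _)) (hsome.isOpenMap.image_mem_nhds hKg)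
    simp [disjoint_insert_left, disjoint_image_iff (Option.some_injective G),
      disjoint_compl_left]
  refine t2Space_iff_disjoint_nhds.mpr ?_
  rintro (_ | g) (_ | h) hne
  · exact absurd rfl hne
  · exact hsep h
  · exact (hsep g).symm
  · rw [← hsome.map_nhds_eq, ← hsome.map_nhds_eq]
    exact (disjoint_map (Option.some_injective G)).mpr
      (disjoint_nhds_nhds.mpr fun e => hne (congrArg some e))

theorem locallyCompactSpace [LocallyCompactSpace G] (hrd : IsOpen 𝒢.units)
    (hτ : τ = alexTop 𝒢) : LocallyCompactSpace (Option G) := by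
  have := 𝒢.t2Space hrd hτ
  have hsome := 𝒢.isOpenEmbedding_some hrd hτ
  have : WeaklyLocallyCompactSpace (Option G) := by
    refine ⟨fun x => ?_⟩
    cases x with
    | none => exact ⟨_, 𝒢.isCompact_insert_none_image_units hrd hτ,
        (𝒢.isOpen_insert_none_image_units hrd hτ).mem_nhds (mem_insert _ _)⟩
    | some g =>
      obtain ⟨K, hK, hKg⟩ := exists_compact_mem_nhds g
      exact ⟨some '' K, hK.image hsome.continuous, hsome.isOpenMap.image_mem_nhds hKg⟩
  infer_instance

theorem isTopologicalBasis_alexBasis (hrd : IsOpen 𝒢.units) (hτ : τ = alexTop 𝒢) :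
    TopologicalSpace.IsTopologicalBasis (alexBasis 𝒢) := by
  refine TopologicalSpace.isTopologicalBasis_of_isOpen_of_nhds (fun s hs => ?_)
    fun x u hxu hu => ?_
  · subst hτ
    exact TopologicalSpace.isOpen_generateFrom_of_mem hs
  · obtain ⟨hW, hK⟩ := (𝒢.isOpen_iff_of_eq_alexTop hrd hτ).mp hu
    exact 𝒢.exists_mem_alexBasis_subset hW hK hxu

def alexGroupoid (hrd : IsOpen 𝒢.units) (hτ : τ = alexTop 𝒢) : TopGroupoid (Option G) where
  src := Option.map 𝒢.src
  rng := Option.map 𝒢.rng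
  mul := 𝒢.optionMul
  inv := Option.map 𝒢.inv
  src_src g := by cases g <;> simp [𝒢.src_src]
  rng_src g := by cases g <;> simp [𝒢.rng_src]
  src_rng g := by cases g <;> simp [𝒢.src_rng]
  rng_rng g := by cases g <;> simp [𝒢.rng_rng]
  src_mul g h hgh := by
    rcases g with _ | g <;> rcases h with _ | h <;>
      first | rfl | contradiction | exact congrArg some (𝒢.src_mul g h _)
  rng_mul g h hgh := by
    rcases g with _ | g <;> rcases h with _ | h <;>
      first | rfl | contradiction | exact congrArg some (𝒢.rng_mul g h _)
  mul_assoc g h k hgh hhk _ _ := by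
    rcases g with _ | g <;> rcases h with _ | h <;> rcases k with _ | k <;>
      first | rfl | contradiction | exact congrArg some (𝒢.mul_assoc g h k _ _ _ _)
  rng_mul_cancel g _ := by
    cases g with
    | none => rfl
    | some g => exact congrArg some (𝒢.rng_mul_cancel g _)
  mul_src_cancel g _ := by
    cases g with
    | none => rfl
    | some g => exact congrArg some (𝒢.mul_src_cancel g _)
  src_inv g := by cases g <;> simp [𝒢.src_inv]
  rng_inv g := by cases g <;> simp [𝒢.rng_inv]
  inv_inv g := by cases g <;> simp [𝒢.inv_inv]
  inv_mul_cancel g _ := by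
    cases g with
    | none => rfl
    | some g => exact congrArg some (𝒢.inv_mul_cancel g _)
  mul_inv_cancel g _ := by
    cases g with
    | none => rfl
    | some g => exact congrArg some (𝒢.mul_inv_cancel g _)
  continuous_src := 𝒢.continuous_optionMap hrd hτ 𝒢.continuous_src fun _ hx => hx
  continuous_rng := 𝒢.continuous_optionMap hrd hτ 𝒢.continuous_rng fun _ => 𝒢.rng_of_mem_units
  continuous_inv := 𝒢.continuous_optionMap hrd hτ 𝒢.continuous_inv fun _ => 𝒢.inv_of_mem_units
  continuous_mul := 𝒢.continuous_optionMul hrd hτ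

theorem units_alexGroupoid (hrd : IsOpen 𝒢.units) (hτ : τ = alexTop 𝒢) :
    (𝒢.alexGroupoid hrd hτ).units = insert none (some '' 𝒢.units) := by
  ext (_ | g) <;> simp [units, alexGroupoid]

end AlexandrovTopology

end TopGroupoid

theorem stmt_12_general {G : Type*} [TopologicalSpace G] [T2Space G] [LocallyCompactSpace G]
    (𝒢 : TopGroupoid G) (hrd : IsOpen 𝒢.units)
    [inst : TopologicalSpace (Option G)] (hinst : inst = alexTop 𝒢) :
    TopologicalSpace.IsTopologicalBasis (alexBasis 𝒢) ∧
    ∃ 𝒢' : TopGroupoid (Option G),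
      (∀ g : G, 𝒢'.src (some g) = some (𝒢.src g)) ∧ 𝒢'.src none = none ∧
      (∀ g : G, 𝒢'.rng (some g) = some (𝒢.rng g)) ∧ 𝒢'.rng none = none ∧
      (∀ g : G, 𝒢'.inv (some g) = some (𝒢.inv g)) ∧ 𝒢'.inv none = none ∧
      (∀ (g h : G) (hgh : 𝒢.src g = 𝒢.rng h)
          (hgh' : 𝒢'.src (some g) = 𝒢'.rng (some h)),
        𝒢'.mul (some g) (some h) hgh' = some (𝒢.mul g h hgh)) ∧
      (∀ hinf : 𝒢'.src none = 𝒢'.rng none, 𝒢'.mul none none hinf = none) ∧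
      𝒢'.units = insert none (some '' 𝒢.units) ∧
      T2Space (Option G) ∧
      LocallyCompactSpace (Option G) ∧
      IsOpen 𝒢'.units ∧
      IsCompact 𝒢'.units ∧
      IsOpen (Set.range (some : G → Option G)) ∧
      Topology.IsEmbedding (some : G → Option G) := by
  have hunits := 𝒢.units_alexGroupoid hrd hinst
  have hsome := 𝒢.isOpenEmbedding_some hrd hinst
  refine ⟨𝒢.isTopologicalBasis_alexBasis hrd hinst, 𝒢.alexGroupoid hrd hinst,
    fun _ => rfl, rfl, fun _ => rfl, rfl, fun _ => rfl, rfl, fun _ _ _ _ => rfl, fun _ => rfl,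
    hunits, 𝒢.t2Space hrd hinst, 𝒢.locallyCompactSpace hrd hinst, ?_, ?_,
    hsome.isOpen_range, hsome.isEmbedding⟩
  · exact hunits ▸ 𝒢.isOpen_insert_none_image_units hrd hinst
  · exact hunits ▸ 𝒢.isCompact_insert_none_image_units hrd hinst

/-- the Alexandrov groupoid.  For a locally compact Hausdorff r-discrete
groupoid `G` with non-compact unit space, the stated collection is a basis for the
generated topology on `G̃ = G ∪ {∞}`, and there is a groupoid structure on `G̃`
extending that of `G` (with `∞` a new unit), making `G̃` a locally compact Hausdorff
r-discrete groupoid with compact unit space containing `G` as an open subgroupoid. -/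
theorem stmt_12 {G : Type*} [TopologicalSpace G] [T2Space G] [LocallyCompactSpace G]
    (𝒢 : TopGroupoid G) (hrd : IsOpen 𝒢.units) (hnc : ¬ IsCompact 𝒢.units)
    [inst : TopologicalSpace (Option G)] (hinst : inst = alexTop 𝒢) :
    TopologicalSpace.IsTopologicalBasis (alexBasis 𝒢) ∧
    ∃ 𝒢' : TopGroupoid (Option G),
      (∀ g : G, 𝒢'.src (some g) = some (𝒢.src g)) ∧ 𝒢'.src none = none ∧
      (∀ g : G, 𝒢'.rng (some g) = some (𝒢.rng g)) ∧ 𝒢'.rng none = none ∧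
      (∀ g : G, 𝒢'.inv (some g) = some (𝒢.inv g)) ∧ 𝒢'.inv none = none ∧
      (∀ (g h : G) (hgh : 𝒢.src g = 𝒢.rng h)
          (hgh' : 𝒢'.src (some g) = 𝒢'.rng (some h)),
        𝒢'.mul (some g) (some h) hgh' = some (𝒢.mul g h hgh)) ∧
      (∀ hinf : 𝒢'.src none = 𝒢'.rng none, 𝒢'.mul none none hinf = none) ∧
      𝒢'.units = insert none (some '' 𝒢.units) ∧
      T2Space (Option G) ∧
      LocallyCompactSpace (Option G) ∧
      IsOpen 𝒢'.units ∧
      IsCompact 𝒢'.units ∧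
      IsOpen (Set.range (some : G → Option G)) ∧
      Topology.IsEmbedding (some : G → Option G) :=
  stmt_12_general 𝒢 hrd (inst := inst) hinst
end

section
/- Let G be a locally compact Hausdorff r-discrete groupoid with non-compact unit space, and let G̃ be its Alexandrov groupoid. If G is étale (the range map is a local homeomorphism), then G̃ is étale. -/
variable {G : Type*} [TopologicalSpace G]

/-
At a point of `G`, the range map of `G̃` is that of `G` transported along `some`, which is an
open embedding `G → G̃` because the unit space is open: the trace on `G` of a neighbourhood of
`∞` is `G⁰ \ K` with `K` compact, hence closed in the Hausdorff space `G`. At `∞`, the set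
`G⁰ ∪ {∞}` is an open neighbourhood on which the range map is the identity.
-/

open Set Topology

namespace TopGroupoid

variable {X : Type*} [TopologicalSpace X] (𝒢 : TopGroupoid X)

def IsRngChart (U : Set X) : Prop :=
  IsOpen U ∧ InjOn 𝒢.rng U ∧ ∀ V ⊆ U, IsOpen V → IsOpen (𝒢.rng '' V)

theorem etale_iff_forall_exists_isRngChart : 𝒢.Etale ↔ ∀ x, ∃ U, x ∈ U ∧ 𝒢.IsRngChart U :=
  ⟨fun h x => let ⟨U, hU, hx, hinj, himg⟩ := h x; ⟨U, hx, hU, hinj, himg⟩,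
    fun h x => let ⟨U, hx, hU, hinj, himg⟩ := h x; ⟨U, hU, hx, hinj, himg⟩⟩

theorem rng_eq_self_of_mem_units {x : X} (hx : x ∈ 𝒢.units) : 𝒢.rng x = x :=
  hx ▸ 𝒢.rng_src x

theorem isRngChart_of_eqOn_id {U : Set X} (hU : IsOpen U) (h : EqOn 𝒢.rng id U) :
    𝒢.IsRngChart U :=
  ⟨hU, injOn_id U |>.congr h.symm, fun _ hVU hV => by rwa [(h.mono hVU).image_eq_self]⟩

theorem IsRngChart.image_of_isOpenEmbedding {Y : Type*} [TopologicalSpace Y] {𝒢 : TopGroupoid X}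
    (𝒢' : TopGroupoid Y) {e : X → Y} (he : IsOpenEmbedding e)
    (hrng : ∀ x, 𝒢'.rng (e x) = e (𝒢.rng x)) {U : Set X} (hU : 𝒢.IsRngChart U) :
    𝒢'.IsRngChart (e '' U) := by
  obtain ⟨hUo, hinj, himg⟩ := hU
  refine ⟨he.isOpenMap U hUo, ?_, fun V hVU hV => ?_⟩
  · rintro _ ⟨a, ha, rfl⟩ _ ⟨b, hb, rfl⟩ hab
    rw [hrng, hrng] at hab
    exact congrArg e (hinj ha hb (he.injective hab))
  · have hV_eq : e '' (e ⁻¹' V) = V :=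
      image_preimage_eq_of_subset (hVU.trans (image_subset_range e U))
    have hpre : e ⁻¹' V ⊆ U := by
      simpa only [preimage_image_eq U he.injective] using preimage_mono (f := e) hVU
    rw [← hV_eq, image_image, funext hrng, ← image_image]
    exact he.isOpenMap _ (himg _ hpre (he.continuous.isOpen_preimage V hV))

end TopGroupoid

section AlexandrovGroupoid

variable {G : Type*} [TopologicalSpace G] {𝒢 : TopGroupoid G}

theorem isOpen_alexTop_image_some {U : Set G} (hU : IsOpen U) : IsOpen[alexTop 𝒢] (some '' U) :=
  .basic _ (Or.inl (Or.inr ⟨U, hU, rfl⟩))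

theorem isOpen_alexTop_insert_none_units :
    IsOpen[alexTop 𝒢] (insert none (some '' 𝒢.units)) := by
  rw [← sdiff_empty (s := 𝒢.units)]
  exact .basic _ (Or.inr ⟨∅, empty_subset _, isCompact_empty, rfl⟩)

theorem continuous_alexTop_some [T2Space G] (hrd : IsOpen 𝒢.units) :
    Continuous[_, alexTop 𝒢] some := by
  refine continuous_generateFrom_iff.mpr ?_
  rintro S ((rfl | ⟨U, hU, rfl⟩) | ⟨K, -, hK, rfl⟩)
  · exact isOpen_univ
  · rwa [preimage_image_eq _ (Option.some_injective G)]
  · have hpre : some ⁻¹' insert none (some '' (𝒢.units \ K)) = 𝒢.units \ K := by ext; simp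
    rw [hpre]
    exact hrd.sdiff hK.isClosed

theorem isOpenEmbedding_alexTop_some [T2Space G] (hrd : IsOpen 𝒢.units) :
    @IsOpenEmbedding G (Option G) _ (alexTop 𝒢) some :=
  letI := alexTop 𝒢
  .of_continuous_injective_isOpenMap (continuous_alexTop_some hrd) (Option.some_injective G)
    fun _ => isOpen_alexTop_image_some

end AlexandrovGroupoid

theorem stmt_13_general {G : Type*} [TopologicalSpace G] [T2Space G]
    (𝒢 : TopGroupoid G) (hrd : IsOpen 𝒢.units)
    (het : 𝒢.Etale)
    [inst : TopologicalSpace (Option G)] (hinst : inst = alexTop 𝒢)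
    (𝒢' : TopGroupoid (Option G))
    (hrng : ∀ g : G, 𝒢'.rng (some g) = some (𝒢.rng g)) (hrng' : 𝒢'.rng none = none) :
    𝒢'.Etale := by
  subst hinst
  let _ := alexTop 𝒢
  rw [TopGroupoid.etale_iff_forall_exists_isRngChart] at het ⊢
  rintro (_ | x)
  · refine ⟨_, mem_insert _ _, 𝒢'.isRngChart_of_eqOn_id isOpen_alexTop_insert_none_units ?_⟩
    rintro _ (rfl | ⟨u, hu, rfl⟩)
    · exact hrng'
    · rw [hrng, 𝒢.rng_eq_self_of_mem_units hu, id]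
  · obtain ⟨U, hxU, hU⟩ := het x
    exact ⟨some '' U, mem_image_of_mem _ hxU,
      hU.image_of_isOpenEmbedding 𝒢' (isOpenEmbedding_alexTop_some hrd) hrng⟩

/-- if `G` is a locally compact Hausdorff r-discrete groupoid with
non-compact unit space which is étale, then its Alexandrov groupoid `G̃` is étale. -/
theorem stmt_13 {G : Type*} [TopologicalSpace G] [T2Space G] [LocallyCompactSpace G]
    (𝒢 : TopGroupoid G) (hrd : IsOpen 𝒢.units) (hnc : ¬ IsCompact 𝒢.units)
    (het : 𝒢.Etale)
    [inst : TopologicalSpace (Option G)] (hinst : inst = alexTop 𝒢)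
    (𝒢' : TopGroupoid (Option G))
    (hsrc : ∀ g : G, 𝒢'.src (some g) = some (𝒢.src g)) (hsrc' : 𝒢'.src none = none)
    (hrng : ∀ g : G, 𝒢'.rng (some g) = some (𝒢.rng g)) (hrng' : 𝒢'.rng none = none)
    (hinv : ∀ g : G, 𝒢'.inv (some g) = some (𝒢.inv g)) (hinv' : 𝒢'.inv none = none)
    (hmul : ∀ (g h : G) (hgh : 𝒢.src g = 𝒢.rng h)
        (hgh' : 𝒢'.src (some g) = 𝒢'.rng (some h)),
      𝒢'.mul (some g) (some h) hgh' = some (𝒢.mul g h hgh))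
    (hmul' : ∀ hinf : 𝒢'.src none = 𝒢'.rng none, 𝒢'.mul none none hinf = none) :
    𝒢'.Etale :=
  stmt_13_general 𝒢 hrd het (inst := inst) hinst 𝒢' hrng hrng'
end

section
/- Let G be a locally compact, Hausdorff, étale groupoid with dynamic asymptotic dimension at most d, and let U ⊆ G⁰ be an open subset of the unit space. Then the restriction G|_U = {g ∈ G : s(g), r(g) ∈ U} has dynamic asymptotic dimension at most d. -/
section Aux
namespace TopGroupoid

variable {G : Type*} [TopologicalSpace G] (𝒢 : TopGroupoid G)

lemma subset_gen (X : Set G) : X ⊆ 𝒢.gen X :=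
  fun x hx => Set.mem_sInter.2 fun _ hS => hS.1 hx

lemma gen_le {X S : Set G} (h1 : X ⊆ S) (h2 : 𝒢.IsSubgroupoid S) : 𝒢.gen X ⊆ S :=
  fun _ hx => Set.mem_sInter.1 hx S ⟨h1, h2⟩

lemma isSubgroupoid_gen (X : Set G) : 𝒢.IsSubgroupoid (𝒢.gen X) := by
  constructor
  · intro g hg
    exact Set.mem_sInter.2 fun S hS => hS.2.1 g (Set.mem_sInter.1 hg S hS)
  · intro g hg h hh hgh
    exact Set.mem_sInter.2 fun S hS =>
      hS.2.2 g (Set.mem_sInter.1 hg S hS) h (Set.mem_sInter.1 hh S hS) hgh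

lemma gen_mono {X Y : Set G} (h : X ⊆ Y) : 𝒢.gen X ⊆ 𝒢.gen Y :=
  𝒢.gen_le (h.trans (𝒢.subset_gen Y)) (𝒢.isSubgroupoid_gen Y)

lemma isSubgroupoid_srcrng (A : Set G) :
    𝒢.IsSubgroupoid {g | 𝒢.src g ∈ A ∧ 𝒢.rng g ∈ A} := by
  constructor
  · intro g hg
    exact ⟨by rw [𝒢.src_inv]; exact hg.2, by rw [𝒢.rng_inv]; exact hg.1⟩
  · intro g hg h hh hgh
    exact ⟨by rw [𝒢.src_mul]; exact hh.1, by rw [𝒢.rng_mul]; exact hg.2⟩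

end TopGroupoid
end Aux
/-- if a locally compact Hausdorff étale groupoid `G` has dynamic
asymptotic dimension at most `d` and `U` is an open subset of the unit space, then the
restriction `G|_U` has dynamic asymptotic dimension at most `d`. -/
theorem stmt_14 {G : Type*} [TopologicalSpace G] [T2Space G] [LocallyCompactSpace G]
    (𝒢 : TopGroupoid G) (het : 𝒢.Etale) {d : ℕ} (hdad : 𝒢.DadLE d)
    (U : Set G) (hUopen : IsOpen U) (hUsub : U ⊆ 𝒢.units)
    (R : Set G) (hR : R = {g | 𝒢.src g ∈ U ∧ 𝒢.rng g ∈ U})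
    (ℛ : TopGroupoid ↥R)
    (hsrc : ∀ g : R, (ℛ.src g : G) = 𝒢.src ↑g)
    (hrng : ∀ g : R, (ℛ.rng g : G) = 𝒢.rng ↑g)
    (hinv : ∀ g : R, (ℛ.inv g : G) = 𝒢.inv ↑g)
    (hmul : ∀ (g h : R) (hgh : ℛ.src g = ℛ.rng h) (hgh' : 𝒢.src ↑g = 𝒢.rng ↑h),
      ((ℛ.mul g h hgh : R) : G) = 𝒢.mul (↑g) (↑h) hgh') :
    ℛ.DadLE d := by
  intro Vr hVropen hVrcpt
  -- Basic facts about R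
  have hRopen : IsOpen R := by
    rw [hR]
    exact (hUopen.preimage 𝒢.continuous_src).inter (hUopen.preimage 𝒢.continuous_rng)
  have hRsub : ∀ g : G, g ∈ R → 𝒢.src g ∈ U ∧ 𝒢.rng g ∈ U := by
    intro g hg; rw [hR] at hg; exact hg
  have hemb : Topology.IsEmbedding (Subtype.val : ↥R → G) := Topology.IsEmbedding.subtypeVal
  have hcont : Continuous (Subtype.val : ↥R → G) := continuous_subtype_val
  -- V₁ : compact subset of G containing the image of Vr
  set V₁ : Set G := Subtype.val '' (closure Vr) with hV₁def
  have hV₁cpt : IsCompact V₁ := hVrcpt.image hcont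
  have hV₁R : V₁ ⊆ R := by rintro g ⟨x, -, rfl⟩; exact x.2
  have hVrV₁ : ∀ g ∈ Vr, (g : G) ∈ V₁ := fun g hg => ⟨g, subset_closure hg, rfl⟩
  -- enlarge to an open precompact V₂ with V₁ ⊆ V₂ ⊆ closure V₂ ⊆ R
  obtain ⟨V₂, hV₂open, hV₁V₂, hV₂clR, hV₂cpt⟩ :=
    exists_open_between_and_isCompact_closure hV₁cpt hRopen hV₁R
  -- apply dad of 𝒢
  obtain ⟨Uf, hUf1, hUf2, hUf3⟩ := hdad V₂ hV₂open hV₂cpt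
  -- the compact set of units we must cover
  set K₀ : Set G := 𝒢.src '' V₁ ∪ 𝒢.rng '' V₁ with hK₀def
  have hK₀cpt : IsCompact K₀ :=
    (hV₁cpt.image 𝒢.continuous_src).union (hV₁cpt.image 𝒢.continuous_rng)
  have hK₀U : K₀ ⊆ U := by
    rintro x (⟨g, hg, rfl⟩ | ⟨g, hg, rfl⟩)
    · exact (hRsub g (hV₁R hg)).1
    · exact (hRsub g (hV₁R hg)).2
  obtain ⟨W, hWopen, hK₀W, hWclU, -⟩ :=
    exists_open_between_and_isCompact_closure hK₀cpt hUopen hK₀U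
  -- the open sets for ℛ
  refine ⟨fun i => Subtype.val ⁻¹' (Uf i ∩ W), ?_, ?_, ?_⟩
  · intro i
    refine ⟨((hUf1 i).1.inter hWopen).preimage hcont, ?_⟩
    intro x hx
    have hxu : 𝒢.src (x : G) = (x : G) := (hUf1 i).2 hx.1
    show ℛ.src x = x
    exact Subtype.ext (by rw [hsrc x, hxu])
  · -- coverage
    rintro x (⟨g, hg, rfl⟩ | ⟨g, hg, rfl⟩)
    · have h1 : 𝒢.src (g : G) ∈ ⋃ i, Uf i :=
        hUf2 (Set.mem_union_left _ ⟨g, hV₁V₂ (hVrV₁ g hg), rfl⟩)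
      obtain ⟨i, hi⟩ := Set.mem_iUnion.1 h1
      refine Set.mem_iUnion.2 ⟨i, ?_⟩
      have h2 : 𝒢.src (g : G) ∈ W := hK₀W (Set.mem_union_left _ ⟨g, hVrV₁ g hg, rfl⟩)
      show (ℛ.src g : G) ∈ Uf i ∩ W
      rw [hsrc g]; exact ⟨hi, h2⟩
    · have h1 : 𝒢.rng (g : G) ∈ ⋃ i, Uf i :=
        hUf2 (Set.mem_union_right _ ⟨g, hV₁V₂ (hVrV₁ g hg), rfl⟩)
      obtain ⟨i, hi⟩ := Set.mem_iUnion.1 h1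
      refine Set.mem_iUnion.2 ⟨i, ?_⟩
      have h2 : 𝒢.rng (g : G) ∈ W := hK₀W (Set.mem_union_right _ ⟨g, hVrV₁ g hg, rfl⟩)
      show (ℛ.rng g : G) ∈ Uf i ∩ W
      rw [hrng g]; exact ⟨hi, h2⟩
  · -- precompactness of the generated subgroupoids
    intro i
    set A : Set ↥R :=
      {g ∈ Vr | ℛ.src g ∈ Subtype.val ⁻¹' (Uf i ∩ W) ∧ ℛ.rng g ∈ Subtype.val ⁻¹' (Uf i ∩ W)}
      with hAdef
    set X : Set G := Subtype.val '' A with hXdef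
    -- X sits inside the corresponding set for 𝒢 and V₂
    have hXsub : X ⊆ {g ∈ V₂ | 𝒢.src g ∈ Uf i ∧ 𝒢.rng g ∈ Uf i} := by
      rintro g ⟨x, ⟨hx1, hx2, hx3⟩, rfl⟩
      refine ⟨hV₁V₂ (hVrV₁ x hx1), ?_, ?_⟩
      · have := hx2.1; rwa [hsrc x] at this
      · have := hx3.1; rwa [hrng x] at this
    have hXsub2 : X ⊆ {g | 𝒢.src g ∈ Uf i ∩ W ∧ 𝒢.rng g ∈ Uf i ∩ W} := by
      rintro g ⟨x, ⟨hx1, hx2, hx3⟩, rfl⟩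
      constructor
      · have := hx2; rwa [Set.mem_preimage, hsrc x] at this
      · have := hx3; rwa [Set.mem_preimage, hrng x] at this
    -- the closure of the generated subgroupoid in G
    set K : Set G := closure (𝒢.gen X) with hKdef
    have hKcpt : IsCompact K :=
      ((hUf3 i).of_isClosed_subset isClosed_closure (closure_mono (𝒢.gen_mono hXsub)))
    have hgenX : 𝒢.gen X ⊆ {g | 𝒢.src g ∈ Uf i ∩ W ∧ 𝒢.rng g ∈ Uf i ∩ W} :=
      𝒢.gen_le hXsub2 (𝒢.isSubgroupoid_srcrng _)
    have hKR : K ⊆ R := by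
      intro g hg
      rw [hR]
      constructor
      · have h1 : 𝒢.src g ∈ closure (𝒢.src '' 𝒢.gen X) :=
          image_closure_subset_closure_image 𝒢.continuous_src ⟨g, hg, rfl⟩
        refine hWclU (closure_mono ?_ h1)
        rintro y ⟨z, hz, rfl⟩; exact (hgenX hz).1.2
      · have h1 : 𝒢.rng g ∈ closure (𝒢.rng '' 𝒢.gen X) :=
          image_closure_subset_closure_image 𝒢.continuous_rng ⟨g, hg, rfl⟩
        refine hWclU (closure_mono ?_ h1)
        rintro y ⟨z, hz, rfl⟩; exact (hgenX hz).2.2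
    -- pull K back to R
    set C : Set ↥R := Subtype.val ⁻¹' K with hCdef
    have hCcpt : IsCompact C := by
      rw [hemb.isCompact_iff]
      have : Subtype.val '' C = K := by
        apply Set.image_preimage_eq_of_subset
        rwa [Subtype.range_coe]
      rwa [this]
    have hCclosed : IsClosed C := isClosed_closure.preimage hcont
    -- ℛ.gen A lands in C
    have hsg : 𝒢.IsSubgroupoid (𝒢.gen X) := 𝒢.isSubgroupoid_gen X
    have hgenA : ℛ.gen A ⊆ C := by
      have hT : ℛ.gen A ⊆ Subtype.val ⁻¹' (𝒢.gen X) := by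
        refine ℛ.gen_le ?_ ?_
        · intro x hx
          exact 𝒢.subset_gen X ⟨x, hx, rfl⟩
        · constructor
          · intro g hg
            show ((ℛ.inv g : ↥R) : G) ∈ 𝒢.gen X
            rw [hinv g]
            exact hsg.1 _ hg
          · intro g hg h hh hgh
            have hgh' : 𝒢.src (g : G) = 𝒢.rng (h : G) := by
              rw [← hsrc g, ← hrng h]
              exact congrArg Subtype.val hgh
            show ((ℛ.mul g h hgh : ↥R) : G) ∈ 𝒢.gen X
            rw [hmul g h hgh hgh']
            exact hsg.2 _ hg _ hh hgh'
      exact hT.trans (Set.preimage_mono subset_closure)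
    exact hCcpt.of_isClosed_subset isClosed_closure
      ((closure_minimal hgenA hCclosed))
end

section
/- Let E be a row-finite directed graph with no sources and no return paths (no cycles). Then the graph groupoid G_E has dynamic asymptotic dimension 0: every open precompact symmetric subset K of G_E generates a precompact subgroupoid of G_E. -/
/-- A directed graph with vertex set `V`, edge set `E`, and range and source maps. -/
structure DirGraph where
  V : Type
  E : Type
  r : E → V
  s : E → V

namespace DirGraph

variable (g : DirGraph)

/-- An infinite path `x₁ x₂ ⋯` in the graph: `s(x_i) = r(x_{i+1})`. -/
def InfPath : Type := {x : ℕ → g.E // ∀ i, g.s (x i) = g.r (x (i + 1))}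

/-- The graph groupoid `G_E = {(x, k, y) : x ∼_k y}`, where `x ∼_k y` means that
`x_i = y_{i+k}` eventually; we encode this by `∃ m n, k = n − m ∧ ∀ i, x_{m+i} = y_{n+i}`. -/
def GraphGroupoid : Type :=
  {p : g.InfPath × ℤ × g.InfPath //
    ∃ m n : ℕ, p.2.1 = (n : ℤ) - (m : ℤ) ∧ ∀ i : ℕ, p.1.val (m + i) = p.2.2.val (n + i)}

/-- Inversion in the graph groupoid: `(x, k, y)⁻¹ = (y, −k, x)`. -/
def ginv (p : g.GraphGroupoid) : g.GraphGroupoid :=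
  ⟨(p.val.2.2, -p.val.2.1, p.val.1), by
    obtain ⟨m, n, hk, h⟩ := p.property
    exact ⟨n, m, by rw [hk]; ring, fun i => (h i).symm⟩⟩

/-- Composition in the graph groupoid: `(x, k, y)(y, l, z) = (x, k + l, z)`. -/
def gmul (p q : g.GraphGroupoid) (hpq : p.val.2.2 = q.val.1) : g.GraphGroupoid :=
  ⟨(p.val.1, p.val.2.1 + q.val.2.1, q.val.2.2), by
    obtain ⟨m, n, hk, h⟩ := p.property
    obtain ⟨m', n', hk', h'⟩ := q.property
    refine ⟨m + m', n' + n, by rw [hk, hk']; push_cast; ring, fun i => ?_⟩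
    calc p.val.1.val (m + m' + i) = p.val.1.val (m + (m' + i)) := by
              rw [Nat.add_assoc]
      _ = p.val.2.2.val (n + (m' + i)) := h (m' + i)
      _ = q.val.1.val (m' + (n + i)) := by
              rw [hpq, show n + (m' + i) = m' + (n + i) by omega]
      _ = q.val.2.2.val (n' + (n + i)) := h' (n + i)
      _ = q.val.2.2.val (n' + n + i) := by rw [Nat.add_assoc]⟩

/-- A finite path `μ₁ ⋯ μ_len` with `s(μ_i) = r(μ_{i+1})`. -/
structure FinPath where
  len : ℕ
  edges : Fin len → g.E
  compat : ∀ (i : ℕ) (h : i + 1 < len),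
    g.s (edges ⟨i, by omega⟩) = g.r (edges ⟨i + 1, h⟩)

/-- The basic (compact open) set `Z(μ, ν)` of the graph groupoid: triples `(x, k, y)`
with `x ∈ Z(μ)`, `y ∈ Z(ν)`, `k = |ν| − |μ|`, and `x_{|μ|+i} = y_{|ν|+i}` for all `i`. -/
def Z (μ ν : g.FinPath) : Set g.GraphGroupoid :=
  {p | p.val.2.1 = (ν.len : ℤ) - (μ.len : ℤ) ∧
    (∀ i : Fin μ.len, p.val.1.val i = μ.edges i) ∧
    (∀ i : Fin ν.len, p.val.2.2.val i = ν.edges i) ∧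
    ∀ i : ℕ, p.val.1.val (μ.len + i) = p.val.2.2.val (ν.len + i)}

/-- The topology on the graph groupoid, generated by the basic sets `Z(μ, ν)`. -/
instance : TopologicalSpace g.GraphGroupoid :=
  TopologicalSpace.generateFrom {S | ∃ μ ν : g.FinPath, S = g.Z μ ν}

/-- A subset of the graph groupoid closed under inversion and composition. -/
def IsSubgroupoid (S : Set g.GraphGroupoid) : Prop :=
  (∀ p ∈ S, g.ginv p ∈ S) ∧
    ∀ p ∈ S, ∀ q ∈ S, ∀ hpq : p.val.2.2 = q.val.1, g.gmul p q hpq ∈ S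

/-- The subgroupoid of the graph groupoid generated by a subset. -/
def gen (K : Set g.GraphGroupoid) : Set g.GraphGroupoid :=
  ⋂₀ {S | K ⊆ S ∧ g.IsSubgroupoid S}

end DirGraph

/-!
Cover the compact set `closure K` by finitely many basic sets `Z(μ, ν)` and let `S` be the finite
set of edges of the paths `μ`, `ν`. The union of the `Z(α, β)` over paths `α`, `β` with edges in
`S` is a subgroupoid: the product of `(x, k, y) ∈ Z(α, β)` with an element of `Z(α', β')`, where
`|β| ≤ |α'|`, lies in `Z(γ, β')` for the initial segment `γ` of `x` of length `|α| + |α'| - |β|`,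
whose edges are edges of `α` or `α'` (the case `|α'| < |β|` follows by inversion). Without return
paths a path never repeats an edge, so only finitely many `α`, `β` occur. Each `Z(α, β)` is closed,
and compact by row-finiteness, so this subgroupoid is compact and closed, and it contains the
closure of the subgroupoid generated by `K`.
-/

namespace DirGraph

variable (g : DirGraph)

def RowFinite : Prop := ∀ v : g.V, {e | g.r e = v}.Finite

def NoReturnPath : Prop :=
  ∀ (μ : g.FinPath) (h : 0 < μ.len),
    g.r (μ.edges ⟨0, h⟩) ≠ g.s (μ.edges ⟨μ.len - 1, Nat.sub_lt h Nat.one_pos⟩)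

def IsPath (x : ℕ → g.E) : Prop := ∀ i, g.s (x i) = g.r (x (i + 1))

variable {g}

namespace FinPath

lemma ofFn_edges_injective : Function.Injective fun π : g.FinPath => List.ofFn π.edges := by
  rintro ⟨l₁, e₁, c₁⟩ ⟨l₂, e₂, c₂⟩ h
  obtain ⟨rfl, h⟩ := Sigma.mk.inj_iff.mp (List.ofFn_inj'.mp h)
  cases eq_of_heq h
  rfl

def segment (π : g.FinPath) (a l : ℕ) (h : a + l ≤ π.len) : g.FinPath where
  len := l
  edges j := π.edges ⟨a + j, by omega⟩
  compat i hi := π.compat (a + i) (by omega)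

lemma edges_injective (hg : g.NoReturnPath) (π : g.FinPath) : Function.Injective π.edges := by
  suffices ∀ a b : Fin π.len, a < b → π.edges a ≠ π.edges b by
    intro a b hab
    by_contra hne
    rcases lt_or_gt_of_ne hne with h | h
    exacts [this a b h hab, this b a h hab.symm]
  intro a b hab hedge
  -- `π` restricted to `[a, b)` would be a return path
  have hlen : (a : ℕ) + ((b : ℕ) - a) ≤ π.len := by omega
  apply hg (π.segment a (b - a) hlen) (by simp only [segment]; omega)
  calc g.r (π.edges a) = g.r (π.edges b) := by rw [hedge]
    _ = g.r (π.edges ⟨b - 1 + 1, by omega⟩) := congrArg (g.r ∘ π.edges) (Fin.ext (by simp; omega))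
    _ = g.s (π.edges ⟨b - 1, by omega⟩) := (π.compat (b - 1) (by omega)).symm
    _ = _ := congrArg (g.s ∘ π.edges) (Fin.ext (by simp [segment]; omega))

def cat (μ : g.FinPath) (f : ℕ → g.E) : ℕ → g.E :=
  fun i => if h : i < μ.len then μ.edges ⟨i, h⟩ else f (i - μ.len)

variable {μ : g.FinPath} {f f' : ℕ → g.E} {i : ℕ}

lemma cat_of_lt (h : i < μ.len) : μ.cat f i = μ.edges ⟨i, h⟩ := dif_pos h

lemma cat_of_ge (h : μ.len ≤ i) : μ.cat f i = f (i - μ.len) := dif_neg (by omega)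

@[simp] lemma cat_len_add : μ.cat f (μ.len + i) = f i := by
  rw [cat_of_ge (by omega), Nat.add_sub_cancel_left]

lemma cat_congr {M : ℕ} (h : ∀ j < M, f' j = f j) (hi : i < μ.len + M) :
    μ.cat f' i = μ.cat f i := by
  unfold cat
  split_ifs
  · rfl
  · exact h _ (by omega)

end FinPath

variable (g) in
def pathsIn (S : Set g.E) : Set g.FinPath := {π | 0 < π.len ∧ ∀ i, π.edges i ∈ S}

lemma finite_pathsIn (hg : g.NoReturnPath) {S : Set g.E} (hS : S.Finite) :
    (g.pathsIn S).Finite := by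
  have : Finite S := hS.to_subtype
  refine Set.Finite.of_finite_image ?_ FinPath.ofFn_edges_injective.injOn
  refine ((List.finite_length_le S (Nat.card S)).image (List.map Subtype.val)).subset ?_
  rintro _ ⟨π, ⟨-, hπ⟩, rfl⟩
  have hinj : Function.Injective fun i => (⟨π.edges i, hπ i⟩ : S) :=
    fun a b hab => π.edges_injective hg (congrArg Subtype.val hab)
  refine ⟨List.ofFn fun i => (⟨π.edges i, hπ i⟩ : S), ?_, by rw [List.map_ofFn]; rfl⟩
  simpa using Nat.card_le_card_of_injective _ hinj

def InfPath.take (x : g.InfPath) (L : ℕ) : g.FinPath where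
  len := L
  edges i := x.val i
  compat i _ := x.property i

lemma GraphGroupoid.ext {p q : g.GraphGroupoid} (h₁ : p.val.1.val = q.val.1.val)
    (h₂ : p.val.2.1 = q.val.2.1) (h₃ : p.val.2.2.val = q.val.2.2.val) : p = q :=
  Subtype.ext (Prod.ext (Subtype.ext h₁) (Prod.ext h₂ (Subtype.ext h₃)))

lemma ginv_gmul_ginv {p q : g.GraphGroupoid} (hpq : p.val.2.2 = q.val.1) :
    g.ginv (g.gmul (g.ginv q) (g.ginv p) hpq.symm) = g.gmul p q hpq :=
  GraphGroupoid.ext rfl (by simp only [ginv, gmul]; ring) rfl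

lemma isOpen_Z (μ ν : g.FinPath) : IsOpen (g.Z μ ν) :=
  TopologicalSpace.isOpen_generateFrom_of_mem ⟨μ, ν, rfl⟩

lemma ginv_mem_Z {μ ν : g.FinPath} {p : g.GraphGroupoid} (hp : p ∈ g.Z μ ν) :
    g.ginv p ∈ g.Z ν μ := by
  obtain ⟨hk, hx, hy, ht⟩ := hp
  exact ⟨by simp [ginv, hk], hy, hx, fun i => (ht i).symm⟩

lemma mem_Z_take {p : g.GraphGroupoid} {m n : ℕ} (hk : p.val.2.1 = (n : ℤ) - m)
    (h : ∀ i, p.val.1.val (m + i) = p.val.2.2.val (n + i)) (c : ℕ) :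
    p ∈ g.Z (p.val.1.take (m + c)) (p.val.2.2.take (n + c)) := by
  refine ⟨?_, fun i => rfl, fun i => rfl, fun i => ?_⟩
  · simp only [InfPath.take, hk]
    push_cast
    ring
  · simpa only [InfPath.take, Nat.add_assoc] using h (c + i)

lemma exists_mem_Z (p : g.GraphGroupoid) (L : ℕ) :
    ∃ μ ν : g.FinPath, L ≤ μ.len ∧ L ≤ ν.len ∧ p ∈ g.Z μ ν := by
  obtain ⟨m, n, hk, h⟩ := p.property
  exact ⟨_, _, by simp [InfPath.take], by simp [InfPath.take], mem_Z_take hk h L⟩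

lemma mem_Z_of_mem_Z_of_len_le {α β μ ν : g.FinPath} {p q : g.GraphGroupoid} (hμ : μ.len ≤ α.len)
    (hp : p ∈ g.Z α β) (hq : q ∈ g.Z α β) (hpZ : p ∈ g.Z μ ν) :
    q ∈ g.Z μ ν := by
  obtain ⟨hkp, hxp, hyp, -⟩ := hp
  obtain ⟨hkq, hxq, hyq, htq⟩ := hq
  obtain ⟨hk, hx, hy, ht⟩ := hpZ
  have hlen : (β.len : ℤ) - α.len = ν.len - μ.len := hkp.symm.trans hk
  refine ⟨hkq.trans hlen, fun i => ?_, fun i => ?_, fun i => ?_⟩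
  · rw [← hx i, hxq ⟨i, by omega⟩, hxp ⟨i, by omega⟩]
  · rw [← hy i, hyq ⟨i, by omega⟩, hyp ⟨i, by omega⟩]
  · by_cases hi : μ.len + i < α.len
    · rw [hxq ⟨_, hi⟩, ← hxp ⟨_, hi⟩, ht i, hyp ⟨ν.len + i, by omega⟩,
        hyq ⟨ν.len + i, by omega⟩]
    · have := htq (μ.len + i - α.len)
      rwa [Nat.add_sub_cancel' (by omega), show β.len + (μ.len + i - α.len) = ν.len + i by omega]
        at this

lemma isClosed_Z (μ ν : g.FinPath) : IsClosed (g.Z μ ν) := by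
  refine isOpen_compl_iff.mp (isOpen_iff_forall_mem_open.mpr fun p hp => ?_)
  obtain ⟨α, β, hα, hβ, hpαβ⟩ := exists_mem_Z p (μ.len + ν.len)
  exact ⟨g.Z α β, fun q hq hqZ => hp (mem_Z_of_mem_Z_of_len_le (by omega) hq hpαβ hqZ),
    isOpen_Z α β, hpαβ⟩

section Composition

variable {α β α' β' : g.FinPath} {p q : g.GraphGroupoid}

lemma gmul_mem_Z_take (hp : p ∈ g.Z α β) (hq : q ∈ g.Z α' β') (hpq : p.val.2.2 = q.val.1)
    (hle : β.len ≤ α'.len) :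
    g.gmul p q hpq ∈ g.Z (p.val.1.take (α.len + (α'.len - β.len))) β' := by
  obtain ⟨hk, -, -, ht⟩ := hp
  obtain ⟨hk', -, hy', ht'⟩ := hq
  refine ⟨?_, fun i => rfl, hy', fun i => ?_⟩
  · simp only [gmul, InfPath.take, hk, hk']
    omega
  · have := ht (α'.len - β.len + i)
    rw [show β.len + (α'.len - β.len + i) = α'.len + i by omega, hpq, ht'] at this
    simpa only [gmul, InfPath.take, Nat.add_assoc] using this

lemma take_edges_mem (hp : p ∈ g.Z α β) (hq : q ∈ g.Z α' β') (hpq : p.val.2.2 = q.val.1)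
    {S : Set g.E} (hα : ∀ i, α.edges i ∈ S) (hα' : ∀ i, α'.edges i ∈ S)
    (i : Fin (p.val.1.take (α.len + (α'.len - β.len))).len) :
    (p.val.1.take (α.len + (α'.len - β.len))).edges i ∈ S := by
  obtain ⟨i, hi⟩ := i
  simp only [InfPath.take] at hi ⊢
  by_cases hiα : i < α.len
  · exact hp.2.1 ⟨i, hiα⟩ ▸ hα _
  · have := hp.2.2.2 (i - α.len)
    rw [Nat.add_sub_cancel' (by omega), hpq, hq.2.1 ⟨β.len + (i - α.len), by omega⟩] at this
    exact this ▸ hα' _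

end Composition

variable (g) in
def unionZ (S : Set g.E) : Set g.GraphGroupoid :=
  ⋃ α ∈ g.pathsIn S, ⋃ β ∈ g.pathsIn S, g.Z α β

lemma mem_unionZ {S : Set g.E} {p : g.GraphGroupoid} :
    p ∈ g.unionZ S ↔ ∃ α ∈ g.pathsIn S, ∃ β ∈ g.pathsIn S, p ∈ g.Z α β := by
  simp only [unionZ, Set.mem_iUnion, exists_prop]

lemma isSubgroupoid_unionZ (S : Set g.E) : g.IsSubgroupoid (g.unionZ S) := by
  refine ⟨fun p hp => ?_, fun p hp q hq hpq => ?_⟩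
  · obtain ⟨α, hα, β, hβ, hpZ⟩ := mem_unionZ.mp hp
    exact mem_unionZ.mpr ⟨β, hβ, α, hα, ginv_mem_Z hpZ⟩
  obtain ⟨α, hα, β, hβ, hpZ⟩ := mem_unionZ.mp hp
  obtain ⟨α', hα', β', hβ', hqZ⟩ := mem_unionZ.mp hq
  rcases le_total β.len α'.len with hle | hle
  · refine mem_unionZ.mpr ⟨_, ⟨?_, take_edges_mem hpZ hqZ hpq hα.2 hα'.2⟩, β', hβ',
      gmul_mem_Z_take hpZ hqZ hpq hle⟩
    exact Nat.add_pos_left hα.1 _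
  · have hqp := gmul_mem_Z_take (ginv_mem_Z hqZ) (ginv_mem_Z hpZ) hpq.symm hle
    refine mem_unionZ.mpr ⟨α, hα, _, ⟨?_, take_edges_mem (ginv_mem_Z hqZ) (ginv_mem_Z hpZ)
      hpq.symm hβ'.2 hβ.2⟩, ginv_gmul_ginv hpq ▸ ginv_mem_Z hqp⟩
    exact Nat.add_pos_left hβ'.1 _

variable (g) in
def reach (v : g.V) : ℕ → Set g.E
  | 0 => {e | g.r e = v}
  | n + 1 => {e | ∃ e' ∈ reach v n, g.r e = g.s e'}

lemma finite_reach (hg : g.RowFinite) (v : g.V) : ∀ n, (g.reach v n).Finite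
  | 0 => hg v
  | n + 1 => by
    have : g.reach v (n + 1) = ⋃ e' ∈ g.reach v n, {e | g.r e = g.s e'} := by
      ext e
      simp [reach]
    rw [this]
    exact (finite_reach hg v n).biUnion fun e' _ => hg (g.s e')

lemma mem_reach {x : ℕ → g.E} (hx : g.IsPath x) : ∀ n, x n ∈ g.reach (g.r (x 0)) n
  | 0 => rfl
  | n + 1 => ⟨x n, mem_reach hx n, (hx n).symm⟩

-- `Z(μ, ν)` is parametrised by the common tail `f` of `x = μf` and `y = νf`.
variable (g) in
def tails (μ ν : g.FinPath) : Set (ℕ → g.E) := {f | g.IsPath (μ.cat f) ∧ g.IsPath (ν.cat f)}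

def ofTails (μ ν : g.FinPath) (f : g.tails μ ν) : g.GraphGroupoid :=
  ⟨(⟨μ.cat f, f.2.1⟩, (ν.len : ℤ) - μ.len, ⟨ν.cat f, f.2.2⟩),
    μ.len, ν.len, rfl, fun i => by simp only [FinPath.cat_len_add]⟩

lemma range_ofTails (μ ν : g.FinPath) : Set.range (ofTails μ ν) = g.Z μ ν := by
  refine Set.Subset.antisymm ?_ fun p ⟨hk, hx, hy, ht⟩ => ?_
  · rintro _ ⟨f, rfl⟩
    exact ⟨rfl, fun i => FinPath.cat_of_lt i.2, fun i => FinPath.cat_of_lt i.2,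
      fun i => by simp only [ofTails, FinPath.cat_len_add]⟩
  set f : ℕ → g.E := fun n => p.val.1.val (μ.len + n)
  have hμ : μ.cat f = p.val.1.val := funext fun i => by
    by_cases hi : i < μ.len
    · rw [FinPath.cat_of_lt hi, ← hx ⟨i, hi⟩]
    · rw [FinPath.cat_of_ge (not_lt.mp hi)]
      exact congrArg p.val.1.val (Nat.add_sub_cancel' (not_lt.mp hi))
  have hν : ν.cat f = p.val.2.2.val := funext fun i => by
    by_cases hi : i < ν.len
    · rw [FinPath.cat_of_lt hi, ← hy ⟨i, hi⟩]
    · rw [FinPath.cat_of_ge (by omega), ← Nat.add_sub_cancel' (not_lt.mp hi), ← ht,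
        Nat.add_sub_cancel_left]
  refine ⟨⟨f, hμ ▸ p.val.1.property, hν ▸ p.val.2.2.property⟩, GraphGroupoid.ext hμ hk.symm hν⟩

lemma ofTails_mem_Z_take {μ ν : g.FinPath} {f f' : g.tails μ ν} {M : ℕ}
    (h : ∀ j < M, f'.val j = f.val j) :
    ofTails μ ν f' ∈ g.Z ((ofTails μ ν f).val.1.take (μ.len + M))
      ((ofTails μ ν f).val.2.2.take (ν.len + M)) := by
  refine ⟨?_, fun i => FinPath.cat_congr h i.2, fun i => FinPath.cat_congr h i.2, fun i => ?_⟩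
  · simp only [ofTails, InfPath.take]
    omega
  · simp only [ofTails, InfPath.take, Nat.add_assoc, FinPath.cat_len_add]

lemma continuous_cat_apply [TopologicalSpace g.E] (μ : g.FinPath) (i : ℕ) :
    Continuous fun f : ℕ → g.E => μ.cat f i := by
  by_cases hi : i < μ.len
  · simp only [FinPath.cat_of_lt hi, continuous_const]
  · simp only [FinPath.cat_of_ge (not_lt.mp hi)]
    exact continuous_apply _

section Topology

variable [TopologicalSpace g.E] [DiscreteTopology g.E]

lemma isClosed_setOf_isPath_cat (μ : g.FinPath) :
    IsClosed {f : ℕ → g.E | g.IsPath (μ.cat f)} := by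
  simp only [IsPath, Set.ofPred_forall]
  exact isClosed_iInter fun i => (isClosed_discrete {q : g.E × g.E | g.s q.1 = g.r q.2}).preimage
    ((continuous_cat_apply μ i).prodMk (continuous_cat_apply μ (i + 1)))

lemma isCompact_tails (hg : g.RowFinite) {μ : g.FinPath} (hμ : 0 < μ.len) (ν : g.FinPath) :
    IsCompact (g.tails μ ν) := by
  have hsub : g.tails μ ν ⊆ Set.univ.pi fun n => g.reach (g.r (μ.edges ⟨0, hμ⟩)) (μ.len + n) :=
    fun f hf n _ => by
      simpa only [FinPath.cat_len_add, FinPath.cat_of_lt hμ] using mem_reach hf.1 (μ.len + n)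
  exact (isCompact_univ_pi fun n => (finite_reach hg _ _).isCompact).of_isClosed_subset
    ((isClosed_setOf_isPath_cat μ).inter (isClosed_setOf_isPath_cat ν)) hsub

lemma continuous_ofTails (μ ν : g.FinPath) : Continuous (ofTails μ ν) := by
  refine continuous_generateFrom_iff.mpr ?_
  rintro _ ⟨α, β, rfl⟩
  refine isOpen_iff_forall_mem_open.mpr fun f hf => ?_
  set M := α.len + β.len
  refine ⟨{f' | ∀ j < M, f'.val j = f.val j}, fun f' hf' => ?_, ?_, fun j _ => rfl⟩
  · exact mem_Z_of_mem_Z_of_len_le (by simp only [InfPath.take]; omega)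
      (ofTails_mem_Z_take fun j _ => rfl) (ofTails_mem_Z_take hf') hf
  · have : IsOpen ((Finset.range M : Set ℕ).pi fun j => {f.val j}) :=
      isOpen_set_pi (Finset.finite_toSet _) fun j _ => isOpen_discrete _
    convert this.preimage continuous_subtype_val
    ext f'
    simp

end Topology

lemma isCompact_Z (hg : g.RowFinite) {μ : g.FinPath} (hμ : 0 < μ.len) (ν : g.FinPath) :
    IsCompact (g.Z μ ν) := by
  let _ : TopologicalSpace g.E := ⊥
  have : DiscreteTopology g.E := ⟨rfl⟩
  have := isCompact_iff_compactSpace.mp (isCompact_tails hg hμ ν)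
  exact range_ofTails μ ν ▸ isCompact_range (continuous_ofTails μ ν)

section UnionZ

variable {S : Set g.E}

lemma isCompact_unionZ (hr : g.RowFinite) (hg : g.NoReturnPath) (hS : S.Finite) :
    IsCompact (g.unionZ S) :=
  (finite_pathsIn hg hS).isCompact_biUnion fun _ hα =>
    (finite_pathsIn hg hS).isCompact_biUnion fun β _ => isCompact_Z hr hα.1 β

lemma isClosed_unionZ (hg : g.NoReturnPath) (hS : S.Finite) : IsClosed (g.unionZ S) :=
  (finite_pathsIn hg hS).isClosed_biUnion fun α _ =>
    (finite_pathsIn hg hS).isClosed_biUnion fun β _ => isClosed_Z α β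

end UnionZ

lemma exists_finite_subset_unionZ {L : Set g.GraphGroupoid} (hL : IsCompact L) :
    ∃ S : Set g.E, S.Finite ∧ L ⊆ g.unionZ S := by
  obtain ⟨t, ht, htfin, hLt⟩ := hL.elim_finite_subcover_image
    (b := {q : g.FinPath × g.FinPath | 0 < q.1.len ∧ 0 < q.2.len}) (c := fun q => g.Z q.1 q.2)
    (fun q _ => isOpen_Z q.1 q.2) fun p _ => by
      obtain ⟨μ, ν, hμ, hν, hp⟩ := exists_mem_Z p 1
      exact Set.mem_iUnion₂.mpr ⟨(μ, ν), ⟨hμ, hν⟩, hp⟩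
  refine ⟨⋃ q ∈ t, Set.range q.1.edges ∪ Set.range q.2.edges,
    htfin.biUnion fun _ _ => (Set.finite_range _).union (Set.finite_range _), fun p hp => ?_⟩
  obtain ⟨q, hq, hpq⟩ := Set.mem_iUnion₂.mp (hLt hp)
  exact mem_unionZ.mpr ⟨q.1, ⟨(ht hq).1, fun i => Set.mem_biUnion hq (Or.inl ⟨i, rfl⟩)⟩,
    q.2, ⟨(ht hq).2, fun i => Set.mem_biUnion hq (Or.inr ⟨i, rfl⟩)⟩, hpq⟩

end DirGraph

/-- if `E` is a row-finite directed graph with no sources and no return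
paths, then the graph groupoid `G_E` has dynamic asymptotic dimension `0`: every open
precompact symmetric subset of `G_E` generates a precompact subgroupoid. -/
theorem stmt_19 (g : DirGraph)
    (hrow : ∀ v : g.V, {e | g.r e = v}.Finite)
    (hnoreturn : ∀ (μ : g.FinPath) (h : 0 < μ.len),
      g.r (μ.edges ⟨0, h⟩) ≠ g.s (μ.edges ⟨μ.len - 1, by omega⟩))
    (K : Set g.GraphGroupoid) (hpre : IsCompact (closure K)) :
    IsCompact (closure (g.gen K)) := by
  obtain ⟨S, hS, hKS⟩ := DirGraph.exists_finite_subset_unionZ hpre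
  have hgen : g.gen K ⊆ g.unionZ S :=
    Set.sInter_subset_of_mem ⟨subset_closure.trans hKS, DirGraph.isSubgroupoid_unionZ S⟩
  exact (DirGraph.isCompact_unionZ hrow hnoreturn hS).of_isClosed_subset isClosed_closure
    (closure_minimal hgen (DirGraph.isClosed_unionZ hnoreturn hS))
end
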